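/- arXiv:1702.02327 — 8 statements merged into one kernel-verified Lean document; each statement's English description precedes it below -/
import Mathlib

section
/- Let q be a prime power and let 0 < n < q and 0 ≤ k ≤ n be integers. The number of monic polynomials f(x) = x^n + a_1 x^{n-1} + ... + a_n over F_q (with all n lower coefficients a_1,...,a_n free) having exactly k distinct roots in F_q equals q^{n-k} * C(q,k) * Σ_{i=0}^{n-k} (-1)^i * C(q-k, i) * q^{-i}. -/
open Finset Polynomial

private lemma countB {F : Type*} [Field F] [Fintype F] [DecidableEq F] (n : ℕ) (T : Finset F)
    (hT : n < T.card) :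
    (Finset.univ.filter (fun a : Fin n → F =>
        ∀ α ∈ T, α ^ n + ∑ i : Fin n, a i * α ^ (i : ℕ) = 0)).card = 0 := by
  rw [Finset.card_eq_zero, Finset.filter_eq_empty_iff]
  intro a _ h
  set pp : F[X] := X ^ n + ∑ i : Fin n, C (a i) * X ^ (i : ℕ) with hpp
  have heval : ∀ α ∈ T, pp.eval α = 0 := by
    intro α hα
    simpa [pp, eval_finset_sum] using h α hα
  have hdeg : pp.natDegree ≤ n := by
    apply le_trans (natDegree_add_le _ _)
    simp only [natDegree_X_pow, max_le_iff, le_refl, true_and]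
    apply natDegree_sum_le_of_forall_le
    intro i _
    exact le_trans (natDegree_C_mul_le _ _) (by simp [Nat.le_of_lt i.isLt])
  have hz : pp = 0 :=
    Polynomial.eq_zero_of_natDegree_lt_card_of_eval_eq_zero' pp T heval (lt_of_le_of_lt hdeg hT)
  have hc : pp.coeff n = 1 := by
    have hzero : ∀ i : Fin n, (C (a i) * X ^ (i : ℕ)).coeff n = 0 := by
      intro i; simp [coeff_C_mul, coeff_X_pow, Nat.ne_of_gt i.isLt]
    simp [pp, finset_sum_coeff, hzero, coeff_X_pow]
  rw [hz] at hc
  simp at hc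

private lemma countA {F : Type*} [Field F] [Fintype F] [DecidableEq F] (n : ℕ) (hn : 0 < n)
    (T : Finset F) (hT : T.card ≤ n) :
    (Finset.univ.filter (fun a : Fin n → F =>
        ∀ α ∈ T, α ^ n + ∑ i : Fin n, a i * α ^ (i : ℕ) = 0)).card
      = Fintype.card F ^ (n - T.card) := by
  classical
  set q := Fintype.card F with hqdef
  set ev : (Fin n → F) → (T → F) := fun a α => ∑ i : Fin n, a i * (α : F) ^ (i : ℕ) with hev
  have hsurj : Function.Surjective ev := by
    intro c
    set r : F → F := fun x => if h : x ∈ T then c ⟨x, h⟩ else 0 with hr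
    set pI := Lagrange.interpolate T id r with hpI
    have hdeg : pI.natDegree < n := by
      by_cases h0 : pI = 0
      · simpa [h0] using hn
      · refine (Polynomial.natDegree_lt_iff_degree_lt h0).mpr ?_
        refine lt_of_lt_of_le (Lagrange.degree_interpolate_lt r (Set.injOn_id _)) ?_
        exact_mod_cast hT
    refine ⟨fun i : Fin n => pI.coeff i, ?_⟩
    funext α
    have h1 : ev (fun i : Fin n => pI.coeff i) α = pI.eval (α : F) := by
      rw [Polynomial.eval_eq_sum_range' hdeg]
      simp only [hev]
      rw [Fin.sum_univ_eq_sum_range (fun i => pI.coeff i * (α : F) ^ i) n]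
    rw [h1, hpI]
    have := Lagrange.eval_interpolate_at_node r (Set.injOn_id (T : Set F)) α.2
    simp only [id_eq] at this
    rw [this, hr]
    simp
  have hadd : ∀ (x y : Fin n → F), ev (x - y) = ev x - ev y := by
    intro x y; funext α
    simp [hev, sub_mul, Finset.sum_sub_distrib]
  have hadd' : ∀ (x y : Fin n → F), ev (x + y) = ev x + ev y := by
    intro x y; funext α
    simp [hev, add_mul, Finset.sum_add_distrib]
  have hfib : ∀ c : T → F,
      (Finset.univ.filter (fun a => ev a = c)).card
        = (Finset.univ.filter (fun a => ev a = 0)).card := by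
    intro c
    obtain ⟨a₀, ha₀⟩ := hsurj c
    refine Finset.card_bij' (fun a _ => a - a₀) (fun b _ => b + a₀) ?_ ?_ ?_ ?_
    · intro a ha
      rw [Finset.mem_filter] at ha ⊢
      refine ⟨Finset.mem_univ _, ?_⟩
      rw [hadd, ha.2, ha₀, sub_self]
    · intro b hb
      rw [Finset.mem_filter] at hb ⊢
      refine ⟨Finset.mem_univ _, ?_⟩
      rw [hadd', hb.2, ha₀, zero_add]
    · intro a ha; simp
    · intro b hb; simp
  have htot : q ^ n = q ^ T.card * (Finset.univ.filter (fun a => ev a = 0)).card := by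
    have h1 : (Finset.univ : Finset (Fin n → F)).card
        = ∑ c : T → F, (Finset.univ.filter (fun a => ev a = c)).card :=
      Finset.card_eq_sum_card_fiberwise (fun x _ => Finset.mem_univ (ev x))
    rw [Finset.card_univ, Fintype.card_fun, Fintype.card_fin, ← hqdef] at h1
    rw [h1]
    rw [Finset.sum_congr rfl (fun c _ => hfib c), Finset.sum_const, Finset.card_univ,
      Fintype.card_fun, Fintype.card_coe, ← hqdef, smul_eq_mul]
  have hfil : (Finset.univ.filter (fun a : Fin n → F =>
        ∀ α ∈ T, α ^ n + ∑ i : Fin n, a i * α ^ (i : ℕ) = 0))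
      = Finset.univ.filter (fun a => ev a = fun α : T => -(α : F) ^ n) := by
    apply Finset.filter_congr
    intro a _
    simp only [hev]
    constructor
    · intro h; funext α
      have h2 := h α α.2
      linear_combination h2
    · intro h α hα
      have := congrFun h ⟨α, hα⟩
      simp only at this
      rw [this]; ring
  rw [hfil, hfib]
  have hq0 : 0 < q := Fintype.card_pos
  have h2 : q ^ T.card * q ^ (n - T.card) = q ^ n := by
    rw [← pow_add, Nat.add_sub_cancel' hT]
  refine Nat.eq_of_mul_eq_mul_left (pow_pos hq0 T.card) ?_
  rw [← htot, h2]

theorem stmt_0 (p e q n k : ℕ) (hp : p.Prime) (he : 0 < e) (hq : q = p ^ e)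
    (F : Type*) [Field F] [Fintype F] (hF : Fintype.card F = q)
    (hn0 : 0 < n) (hnq : n < q) (hk : k ≤ n) :
    (Nat.card {a : Fin n → F //
        Nat.card {α : F // α ^ n + ∑ i : Fin n, a i * α ^ (i : ℕ) = 0} = k} : ℚ)
      = (q : ℚ) ^ (n - k) * (q.choose k) *
        ∑ i ∈ Finset.range (n - k + 1),
          (-1 : ℚ) ^ i * ((q - k).choose i) * (q : ℚ) ^ (-(i : ℤ)) := by
  classical
  have hq0 : 0 < q := hF ▸ Fintype.card_pos
  have hqQ : (q : ℚ) ≠ 0 := Nat.cast_ne_zero.mpr hq0.ne'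
  set R : (Fin n → F) → Finset F :=
    fun a => Finset.univ.filter (fun α : F => α ^ n + ∑ i : Fin n, a i * α ^ (i : ℕ) = 0) with hR
  have hL : Nat.card {a : Fin n → F //
      Nat.card {α : F // α ^ n + ∑ i : Fin n, a i * α ^ (i : ℕ) = 0} = k}
      = (Finset.univ.filter (fun a : Fin n → F => (R a).card = k)).card := by
    rw [Nat.card_eq_fintype_card, Fintype.card_subtype]
    congr 1
    apply Finset.filter_congr
    intro a _
    rw [Nat.card_eq_fintype_card, Fintype.card_subtype]
  rw [hL]
  clear hL
  -- key per-fiber count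
  have key : ∀ S : Finset F, S.card = k →
      ((Finset.univ.filter (fun a : Fin n → F => R a = S)).card : ℚ)
        = ∑ j ∈ Finset.range (n - k + 1),
            (-1 : ℚ) ^ j * ((q - k).choose j) * (q : ℚ) ^ (n - k - j) := by
    intro S hS
    have hSsub : ∀ {a : Fin n → F}, R a = S → S ⊆ R a := fun h => h ▸ Finset.Subset.refl _
    have hpt : ∀ a : Fin n → F,
        (if R a = S then (1 : ℚ) else 0)
          = ∑ U ∈ Sᶜ.powerset, (-1 : ℚ) ^ U.card * (if S ∪ U ⊆ R a then 1 else 0) := by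
      intro a
      by_cases hSR : S ⊆ R a
      · have h1 : ∀ U ∈ Sᶜ.powerset,
            (-1 : ℚ) ^ U.card * (if S ∪ U ⊆ R a then 1 else 0)
              = if U ⊆ R a \ S then (-1 : ℚ) ^ U.card else 0 := by
          intro U hU
          rw [Finset.mem_powerset] at hU
          by_cases h : U ⊆ R a \ S
          · rw [if_pos (Finset.union_subset hSR (h.trans (Finset.sdiff_subset))), mul_one,
              if_pos h]
          · rw [if_neg, mul_zero, if_neg h]
            intro hc
            refine h (Finset.subset_sdiff.mpr ⟨(Finset.subset_union_right).trans hc, ?_⟩)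
            exact Finset.disjoint_left.mpr fun x hxU hxS => (Finset.mem_compl.mp (hU hxU)) hxS
        rw [Finset.sum_congr rfl h1, ← Finset.sum_filter]
        have hps : Sᶜ.powerset.filter (fun U => U ⊆ R a \ S) = (R a \ S).powerset := by
          ext U
          simp only [Finset.mem_filter, Finset.mem_powerset]
          constructor
          · rintro ⟨-, h⟩; exact h
          · intro h
            exact ⟨h.trans (fun x hx => Finset.mem_compl.mpr (Finset.mem_sdiff.mp hx).2), h⟩
        rw [hps]
        have h2 : ∑ U ∈ (R a \ S).powerset, (-1 : ℚ) ^ U.card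
            = if R a \ S = ∅ then 1 else 0 := by
          have h3 := Finset.sum_powerset_neg_one_pow_card (x := R a \ S)
          by_cases he' : R a \ S = ∅
          · simp [he']
          · simp only [he', if_neg, if_false] at h3 ⊢
            exact_mod_cast h3
        rw [h2]
        congr 1
        · rw [eq_iff_iff]
          rw [Finset.sdiff_eq_empty_iff_subset]
          constructor
          · intro h; exact h ▸ Finset.Subset.refl _
          · intro h; exact Finset.Subset.antisymm h hSR
      · rw [if_neg (fun h => hSR (hSsub h))]
        rw [eq_comm]
        apply Finset.sum_eq_zero
        intro U hU
        rw [if_neg, mul_zero]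
        intro hc
        exact hSR ((Finset.subset_union_left).trans hc)
    calc ((Finset.univ.filter (fun a : Fin n → F => R a = S)).card : ℚ)
        = ∑ a : Fin n → F, (if R a = S then (1 : ℚ) else 0) := (Finset.sum_boole _ _).symm
      _ = ∑ a : Fin n → F, ∑ U ∈ Sᶜ.powerset,
            (-1 : ℚ) ^ U.card * (if S ∪ U ⊆ R a then 1 else 0) :=
          Finset.sum_congr rfl fun a _ => hpt a
      _ = ∑ U ∈ Sᶜ.powerset, (-1 : ℚ) ^ U.card *
            ((Finset.univ.filter (fun a : Fin n → F => S ∪ U ⊆ R a)).card : ℚ) := by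
          rw [Finset.sum_comm]
          refine Finset.sum_congr rfl fun U _ => ?_
          rw [← Finset.mul_sum, Finset.sum_boole]
      _ = ∑ U ∈ Sᶜ.powerset, (-1 : ℚ) ^ U.card *
            (if k + U.card ≤ n then (q : ℚ) ^ (n - (k + U.card)) else 0) := by
          refine Finset.sum_congr rfl fun U hU => ?_
          congr 1
          have hdisj : Disjoint S U := by
            rw [Finset.mem_powerset] at hU
            exact (Finset.disjoint_left.mpr fun x hxU hxS => (Finset.mem_compl.mp (hU hxU)) hxS).symm
          have hcardU : (S ∪ U).card = k + U.card := by
            rw [Finset.card_union_of_disjoint hdisj, hS]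
          have hfilter : (Finset.univ.filter (fun a : Fin n → F => S ∪ U ⊆ R a))
              = Finset.univ.filter (fun a : Fin n → F =>
                  ∀ α ∈ S ∪ U, α ^ n + ∑ i : Fin n, a i * α ^ (i : ℕ) = 0) := by
            apply Finset.filter_congr
            intro a _
            simp [hR, Finset.subset_iff]
          by_cases hle : k + U.card ≤ n
          · rw [if_pos hle, hfilter]
            rw_mod_cast [countA n hn0 (S ∪ U) (hcardU ▸ hle), hF, hcardU]
          · rw [if_neg hle, hfilter]
            rw_mod_cast [countB n (S ∪ U) (by rw [hcardU]; omega : n < (S ∪ U).card)]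
      _ = ∑ j ∈ Finset.range ((q - k) + 1), (q - k).choose j •
            ((-1 : ℚ) ^ j * (if k + j ≤ n then (q : ℚ) ^ (n - (k + j)) else 0)) := by
          have hSc : Sᶜ.card = q - k := by rw [Finset.card_compl, hF, hS]
          rw [← hSc]
          exact Finset.sum_powerset_apply_card
            (f := fun j => (-1 : ℚ) ^ j * (if k + j ≤ n then (q : ℚ) ^ (n - (k + j)) else 0))
      _ = ∑ j ∈ Finset.range (n - k + 1),
            (-1 : ℚ) ^ j * ((q - k).choose j) * (q : ℚ) ^ (n - k - j) := by
          have hvan : ∀ j ∈ Finset.range (q - k + 1), j ∉ Finset.range (n - k + 1) →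
              (q - k).choose j •
                ((-1 : ℚ) ^ j * (if k + j ≤ n then (q : ℚ) ^ (n - (k + j)) else 0)) = 0 := by
            intro j hj hj2
            rw [Finset.mem_range] at hj hj2
            rw [if_neg (by omega), mul_zero, smul_zero]
          rw [← Finset.sum_subset
            (Finset.range_subset_range.mpr (by omega : n - k + 1 ≤ q - k + 1)) hvan]
          refine Finset.sum_congr rfl fun j hj => ?_
          rw [Finset.mem_range] at hj
          rw [if_pos (by omega), nsmul_eq_mul]
          have : n - (k + j) = n - k - j := by omega
          rw [this]; ring
  -- fiberwise over root sets
  have h1 : ((Finset.univ.filter (fun a : Fin n → F => (R a).card = k)).card : ℚ)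
      = ∑ S ∈ Finset.powersetCard k (Finset.univ : Finset F),
          ((Finset.univ.filter (fun a : Fin n → F => R a = S)).card : ℚ) := by
    rw_mod_cast [Finset.card_eq_sum_card_fiberwise
      (f := R) (t := Finset.powersetCard k Finset.univ)
      (fun a ha => Finset.mem_powersetCard_univ.mpr (Finset.mem_filter.mp ha).2)]
    apply Finset.sum_congr rfl
    intro S hS
    congr 1
    ext a
    simp only [Finset.mem_filter, Finset.mem_univ, true_and]
    constructor
    · rintro ⟨-, h⟩; exact h
    · intro h; exact ⟨h ▸ Finset.mem_powersetCard_univ.mp hS, h⟩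
  rw [h1, Finset.sum_congr rfl (fun S hS => key S (Finset.mem_powersetCard_univ.mp hS)),
    Finset.sum_const, Finset.card_powersetCard, Finset.card_univ, hF, nsmul_eq_mul]
  rw [mul_comm ((q : ℚ) ^ (n - k)) ((q.choose k : ℚ)), mul_assoc]
  congr 1
  rw [Finset.mul_sum]
  refine Finset.sum_congr rfl fun i hi => ?_
  rw [Finset.mem_range] at hi
  have hpow : (q : ℚ) ^ (n - k) * (q : ℚ) ^ (-(i : ℤ)) = (q : ℚ) ^ (n - k - i) := by
    rw [← zpow_natCast (q : ℚ) (n - k), ← zpow_add₀ hqQ, ← zpow_natCast (q : ℚ) (n - k - i)]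
    congr 1
    omega
  rw [← hpow]; ring
end

section
/- Let q be a prime power, n ≥ q, and 0 ≤ k ≤ q. The number of tuples (a_1,...,a_n) ∈ F_q^n such that the polynomial x^n + a_1 x^{n-1} + ... + a_n has exactly k distinct roots in F_q equals C(q,k) * q^{n-q} * (q-1)^{q-k}. -/
open Finset Polynomial

section Aux
variable {F : Type*} [Field F] [Fintype F] [DecidableEq F]

set_option maxHeartbeats 1000000 in
private lemma aux_interp (g : F → F) :
    ∃ P : F[X], P.degree < Fintype.card F ∧ ∀ α, P.eval α = g α := by
  refine ⟨Lagrange.interpolate univ id g, ?_, ?_⟩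
  · have := Lagrange.degree_interpolate_lt (v := (id : F → F)) (s := univ) g
      (Function.injective_id.injOn)
    simpa using this
  · intro α
    have := Lagrange.eval_interpolate_at_node (v := (id : F → F)) (s := univ) g
      Function.injective_id.injOn (mem_univ α)
    simpa using this

private lemma aux_surj (n : ℕ) (hn : Fintype.card F ≤ n) (g : F → F) :
    ∃ a : Fin n → F, ∀ α, ∑ i : Fin n, a i * α ^ (i : ℕ) = g α := by
  obtain ⟨P, hdeg, hev⟩ := aux_interp g
  have hq0 : Fintype.card F ≠ 0 := Fintype.card_ne_zero
  have hn0 : 0 < n := lt_of_lt_of_le (Nat.pos_of_ne_zero hq0) hn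
  have hnd : P.natDegree < n := by
    rcases eq_or_ne P 0 with rfl | hP
    · simpa using hn0
    · exact lt_of_lt_of_le ((Polynomial.natDegree_lt_iff_degree_lt hP).2
        (by exact_mod_cast hdeg)) hn
  refine ⟨fun i => P.coeff i, fun α => ?_⟩
  rw [Fin.sum_univ_eq_sum_range (fun i => P.coeff i * α ^ i), ← hev α,
    Polynomial.eval_eq_sum_range' hnd]

private noncomputable def Lmap (F : Type*) [Field F] [Fintype F] (n : ℕ) :
    (Fin n → F) →+ (F → F) where
  toFun a := fun α => ∑ i : Fin n, a i * α ^ (i : ℕ)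
  map_zero' := by funext α; simp
  map_add' a b := by funext α; simp [add_mul, Finset.sum_add_distrib]

@[simp] private lemma Lmap_apply (n : ℕ) (a : Fin n → F) (α : F) :
    Lmap F n a α = ∑ i : Fin n, a i * α ^ (i : ℕ) := rfl

private lemma aux_fiber_card (n : ℕ) (hn : Fintype.card F ≤ n) (g : F → F) :
    Fintype.card {a : Fin n → F // Lmap F n a = g}
      = Fintype.card {a : Fin n → F // Lmap F n a = 0} := by
  obtain ⟨a0, ha0'⟩ := aux_surj n hn g
  have ha0 : Lmap F n a0 = g := funext ha0'
  refine Fintype.card_congr ⟨fun a => ⟨a.1 - a0, ?_⟩, fun a => ⟨a.1 + a0, ?_⟩, ?_, ?_⟩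
  · rw [map_sub, a.2, ha0, sub_self]
  · rw [map_add, a.2, ha0, zero_add]
  · intro a; ext : 1; simp
  · intro a; ext : 1; simp

private lemma aux_fiber (n : ℕ) (hn : Fintype.card F ≤ n) (g : F → F) :
    Fintype.card {a : Fin n → F // Lmap F n a = g}
      = Fintype.card F ^ (n - Fintype.card F) := by
  set q := Fintype.card F with hq
  set c := Fintype.card {a : Fin n → F // Lmap F n a = 0} with hc
  have hcard : ∀ y : F → F, Fintype.card {a : Fin n → F // Lmap F n a = y} = c :=
    fun y => aux_fiber_card n hn y
  have htotal : q ^ n = q ^ q * c := by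
    have h1 : (univ : Finset (Fin n → F)).card
        = ∑ y : F → F, (univ.filter fun a : Fin n → F => Lmap F n a = y).card :=
      Finset.card_eq_sum_card_fiberwise (fun a _ => mem_univ _)
    have h2 : ∀ y : F → F, (univ.filter fun a : Fin n → F => Lmap F n a = y).card = c := by
      intro y; rw [← Fintype.card_subtype]; exact hcard y
    simp only [h2, Finset.sum_const, card_univ] at h1
    simpa [Fintype.card_fun, mul_comm] using h1
  have hqpos : 0 < q := Fintype.card_pos
  have hsplit : q ^ n = q ^ q * q ^ (n - q) := by rw [← pow_add, Nat.add_sub_cancel' hn]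
  rw [hcard g]
  exact (Nat.eq_of_mul_eq_mul_left (pow_pos hqpos q) (htotal.symm.trans hsplit).symm).symm

private lemma aux_zero_set (T : Finset F) :
    Fintype.card {g : F → F // univ.filter (fun α => g α = 0) = T}
      = (Fintype.card F - 1) ^ (Fintype.card F - T.card) := by
  have e : {g : F → F // univ.filter (fun α => g α = 0) = T}
      ≃ ((Tᶜ : Finset F) → {x : F // x ≠ 0}) := by
    refine ⟨fun g α => ⟨g.1 α.1, fun h0 => ?_⟩,
      fun f => ⟨fun α => if h : α ∈ T then 0 else (f ⟨α, mem_compl.2 h⟩).1, ?_⟩, ?_, ?_⟩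
    · have hm : (α : F) ∈ univ.filter (fun β => g.1 β = 0) :=
        mem_filter.2 ⟨mem_univ _, h0⟩
      rw [g.2] at hm
      exact (mem_compl.1 α.2) hm
    · ext α
      simp only [mem_filter, mem_univ, true_and]
      constructor
      · intro h
        by_contra hT
        rw [dif_neg hT] at h
        exact (f ⟨α, mem_compl.2 hT⟩).2 h
      · intro h; rw [dif_pos h]
    · intro g
      ext α
      by_cases h : α ∈ T
      · simp only [dif_pos h]
        have : α ∈ univ.filter (fun α => g.1 α = 0) := by rw [g.2]; exact h
        exact ((mem_filter.1 this).2).symm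
      · simp only [dif_neg h]
    · intro f
      funext α
      ext
      simp only [dif_neg (mem_compl.1 α.2)]
  rw [Fintype.card_congr e, Fintype.card_fun]
  have h1 : Fintype.card {x : F // x ≠ 0} = Fintype.card F - 1 := by
    rw [Fintype.card_subtype_compl, Fintype.card_subtype_eq (0 : F)]
  have h2 : Fintype.card ((Tᶜ : Finset F) : Type _) = Fintype.card F - T.card := by
    simp [Finset.card_compl]
  rw [h1, h2]

private lemma aux_count_zeros (k : ℕ) :
    (univ.filter fun g : F → F => (univ.filter fun α => g α = 0).card = k).card
      = (Fintype.card F).choose k * (Fintype.card F - 1) ^ (Fintype.card F - k) := by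
  rw [Finset.card_eq_sum_card_fiberwise
    (f := fun g : F → F => univ.filter fun α => g α = 0)
    (t := univ.filter fun s : Finset F => s.card = k)
    (fun g hg => mem_filter.2 ⟨mem_univ _, (mem_filter.1 hg).2⟩)]
  have h2 : ∀ T ∈ (univ.filter fun s : Finset F => s.card = k),
      ((univ.filter fun g : F → F => (univ.filter fun α => g α = 0).card = k).filter
        (fun g => (univ.filter fun α => g α = 0) = T)).card
      = (Fintype.card F - 1) ^ (Fintype.card F - k) := by
    intro T hT
    have hTk : T.card = k := (mem_filter.1 hT).2
    have heq : ((univ.filter fun g : F → F => (univ.filter fun α => g α = 0).card = k).filter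
        (fun g => (univ.filter fun α => g α = 0) = T))
        = univ.filter (fun g : F → F => (univ.filter fun α => g α = 0) = T) := by
      rw [Finset.filter_filter]
      apply Finset.filter_congr
      intro g _
      constructor
      · exact fun h => h.2
      · exact fun h => ⟨by rw [h, hTk], h⟩
    rw [heq, ← Fintype.card_subtype, aux_zero_set, hTk]
  rw [Finset.sum_congr rfl h2, Finset.sum_const, smul_eq_mul]
  congr 1
  have : (univ.filter fun s : Finset F => s.card = k) = Finset.powersetCard k univ := by
    rw [Finset.powersetCard_eq_filter, Finset.powerset_univ]
  rw [this, Finset.card_powersetCard, Finset.card_univ]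

end Aux

theorem stmt_1 (p e q n k : ℕ) (hp : p.Prime) (he : 0 < e) (hq : q = p ^ e)
    (F : Type*) [Field F] [Fintype F] (hF : Fintype.card F = q)
    (hn : q ≤ n) (hk : k ≤ q) :
    Nat.card {a : Fin n → F //
        Nat.card {α : F // α ^ n + ∑ i : Fin n, a i * α ^ (i : ℕ) = 0} = k}
      = q.choose k * q ^ (n - q) * (q - 1) ^ (q - k) := by
  classical
  have hn' : Fintype.card F ≤ n := hF ▸ hn
  -- rewrite the inner Nat.card in terms of filter cards
  have key : ∀ a : Fin n → F,
      Nat.card {α : F // α ^ n + ∑ i : Fin n, a i * α ^ (i : ℕ) = 0}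
        = (univ.filter fun α : F =>
            ((fun β : F => β ^ n) + Lmap F n a) α = 0).card := by
    intro a
    rw [Nat.card_eq_fintype_card, Fintype.card_subtype]
    congr 1
  rw [Nat.card_eq_fintype_card, Fintype.card_subtype]
  have hset : (univ.filter fun a : Fin n → F =>
        Nat.card {α : F // α ^ n + ∑ i : Fin n, a i * α ^ (i : ℕ) = 0} = k)
      = univ.filter fun a : Fin n → F =>
          (univ.filter fun α : F =>
            ((fun β : F => β ^ n) + Lmap F n a) α = 0).card = k := by
    apply Finset.filter_congr
    intro a _
    rw [key a]
  rw [hset]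
  set E : (Fin n → F) → (F → F) := fun a => (fun β : F => β ^ n) + Lmap F n a with hE
  rw [Finset.card_eq_sum_card_fiberwise
    (f := E)
    (t := univ.filter fun g : F → F => (univ.filter fun α => g α = 0).card = k)
    (fun a ha => mem_filter.2 ⟨mem_univ _, (mem_filter.1 ha).2⟩)]
  have h2 : ∀ g ∈ (univ.filter fun g : F → F => (univ.filter fun α => g α = 0).card = k),
      ((univ.filter fun a : Fin n → F =>
          (univ.filter fun α : F => E a α = 0).card = k).filter (fun a => E a = g)).card
        = q ^ (n - q) := by
    intro g hg
    have hgk : (univ.filter fun α => g α = 0).card = k := (mem_filter.1 hg).2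
    have heq : ((univ.filter fun a : Fin n → F =>
          (univ.filter fun α : F => E a α = 0).card = k).filter (fun a => E a = g))
        = univ.filter (fun a : Fin n → F => E a = g) := by
      rw [Finset.filter_filter]
      apply Finset.filter_congr
      intro a _
      constructor
      · exact fun h => h.2
      · exact fun h => ⟨by rw [h, hgk], h⟩
    have hfib : (univ.filter fun a : Fin n → F => E a = g)
        = univ.filter fun a : Fin n → F => Lmap F n a = g - (fun β : F => β ^ n) := by
      apply Finset.filter_congr
      intro a _
      constructor
      · intro h
        rw [eq_sub_iff_add_eq, add_comm]
        exact h
      · intro h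
        show (fun β : F => β ^ n) + Lmap F n a = g
        rw [eq_sub_iff_add_eq, add_comm] at h
        exact h
    rw [heq, hfib, ← Fintype.card_subtype, aux_fiber n hn', hF]
  rw [Finset.sum_congr rfl h2, Finset.sum_const, smul_eq_mul]
  have hcz : (univ.filter fun g : F → F =>
        (univ.filter fun α => g α = 0).card = k).card
      = q.choose k * (q - 1) ^ (q - k) := by
    rw [← hF]
    exact aux_count_zeros k
  rw [hcz]
  ring
end

section
/- Let F_q be a finite field of characteristic p, let 1 ≤ n ≤ q, and let b ∈ F_q. Let M(n,b) be the number of n-element subsets S of F_q with Σ_{a∈S} a = b. If p does not divide n, then M(n,b) = (1/q) * C(q,n). -/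
/-!
Translating an `n`-element subset by `c` adds `n • c` to its sum. When `n` is invertible in the
field, every `b' - b` is of the form `n • c`, so the `q` fibres of the map "sum of the elements"
on `n`-element subsets all have the same size, and together they contain all `C(q, n)` subsets.
-/

open Finset Pointwise

section

variable {G : Type*} [AddCommGroup G] [DecidableEq G]

lemma Finset.sum_vadd_finset (c : G) (S : Finset G) :
    ∑ x ∈ c +ᵥ S, x = ∑ x ∈ S, x + #S • c := by
  simp only [← image_vadd, vadd_eq_add]
  rw [sum_image (add_right_injective c).injOn, sum_add_distrib, sum_const, add_comm]

variable [Fintype G]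

def subsetsWithSum (n : ℕ) (b : G) : Finset (Finset G) :=
  {S ∈ powersetCard n univ | ∑ x ∈ S, x = b}

lemma mem_subsetsWithSum {n : ℕ} {b : G} {S : Finset G} :
    S ∈ subsetsWithSum n b ↔ #S = n ∧ ∑ x ∈ S, x = b := by
  rw [subsetsWithSum, mem_filter, mem_powersetCard_univ]

lemma vadd_mem_subsetsWithSum {n : ℕ} {b : G} {S : Finset G} (c : G)
    (hS : S ∈ subsetsWithSum n b) : c +ᵥ S ∈ subsetsWithSum n (b + n • c) := by
  obtain ⟨hcard, hsum⟩ := mem_subsetsWithSum.mp hS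
  rw [mem_subsetsWithSum, card_vadd_finset, sum_vadd_finset, hcard, hsum]
  exact ⟨rfl, rfl⟩

lemma card_subsetsWithSum_add_nsmul (n : ℕ) (b c : G) :
    #(subsetsWithSum n (b + n • c)) = #(subsetsWithSum n b) := by
  refine card_nbij' (-c +ᵥ ·) (c +ᵥ ·) (fun S hS => ?_) (fun S hS => vadd_mem_subsetsWithSum c hS)
    (fun S _ => by simp [vadd_vadd]) (fun S _ => by simp [vadd_vadd])
  simpa using vadd_mem_subsetsWithSum (-c) hS

lemma card_subsetsWithSum_eq_of_surjective {n : ℕ} (hn : Function.Surjective (n • · : G → G))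
    (b b' : G) : #(subsetsWithSum n b') = #(subsetsWithSum n b) := by
  obtain ⟨c, hc⟩ := hn (b' - b)
  rw [← card_subsetsWithSum_add_nsmul n b c, show n • c = b' - b from hc, add_sub_cancel]

lemma sum_card_subsetsWithSum (n : ℕ) :
    ∑ b : G, #(subsetsWithSum n b) = (Fintype.card G).choose n := by
  rw [← card_univ, ← card_powersetCard,
    card_eq_sum_card_fiberwise (f := fun S : Finset G => ∑ x ∈ S, x) fun _ _ => mem_univ _]
  rfl

lemma card_mul_card_subsetsWithSum {n : ℕ} (hn : Function.Surjective (n • · : G → G)) (b : G) :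
    Fintype.card G * #(subsetsWithSum n b) = (Fintype.card G).choose n := by
  rw [← sum_card_subsetsWithSum,
    sum_congr rfl fun b' _ => card_subsetsWithSum_eq_of_surjective hn b b', sum_const,
    card_univ, smul_eq_mul]

end

theorem stmt_2_general (p q n : ℕ)
    (F : Type*) [Field F] [Fintype F] (hF : Fintype.card F = q) (hchar : CharP F p)
    (hpn : ¬ p ∣ n) (b : F) :
    (Nat.card {S : Finset F // S.card = n ∧ ∑ x ∈ S, x = b} : ℚ)
      = (1 / q) * q.choose n := by
  classical
  have hn : (n : F) ≠ 0 := (CharP.cast_eq_zero_iff F p n).not.mpr hpn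
  have hsurj : Function.Surjective (n • · : F → F) := fun y =>
    ⟨(n : F)⁻¹ * y, by simp only [nsmul_eq_mul, mul_inv_cancel_left₀ hn]⟩
  have hcard : Nat.card {S : Finset F // S.card = n ∧ ∑ x ∈ S, x = b} =
      #(subsetsWithSum n b) := by
    rw [Nat.card_eq_fintype_card, Fintype.card_subtype]
    congr 1
    ext S
    rw [mem_filter, mem_subsetsWithSum]
    exact and_iff_right (mem_univ S)
  have hq : (q : ℚ) ≠ 0 := by rw [← hF]; exact_mod_cast Fintype.card_ne_zero
  rw [hcard, ← hF, ← card_mul_card_subsetsWithSum hsurj b, hF]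
  push_cast
  field_simp

theorem stmt_2 (p e q n : ℕ) (hp : p.Prime) (he : 0 < e) (hq : q = p ^ e)
    (F : Type*) [Field F] [Fintype F] (hF : Fintype.card F = q) (hchar : CharP F p)
    (hn1 : 1 ≤ n) (hnq : n ≤ q) (hpn : ¬ p ∣ n) (b : F) :
    (Nat.card {S : Finset F // S.card = n ∧ ∑ x ∈ S, x = b} : ℚ)
      = (1 / q) * q.choose n :=
  stmt_2_general p q n F hF hchar hpn b
end

section
/- Let F_q be a finite field of characteristic p, let 1 ≤ n ≤ q, and let b ∈ F_q. Let M(n,b) be the number of n-element subsets S of F_q with Σ_{a∈S} a = b. If p divides n, then M(n,b) = (1/q) * C(q,n) + (-1)^{n + n/p} * (v(b)/q) * C(q/p, n/p), where v(b) = q-1 if b = 0 and v(b) = -1 if b ≠ 0. -/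
/-!
Scaling by a nonzero `u` permutes the `n`-subsets of `F` and multiplies their sums by `u`, so
`M(n, b)` depends only on whether `b = 0`, and counting all `n`-subsets gives
`M(n, 0) + (q - 1) M(n, 1) = C(q, n)`. For a nontrivial additive character `ψ : F → ℂ`,
`M(n, 0) - M(n, 1) = ∑_b M(n, b) ψ(b)`, which is the `n`-th elementary symmetric function of the
values `ψ(a)`. These values are the `p`-th roots of unity, each taken `q / p` times, so
`∏_a (X + ψ(a)) = (X^p - (-1)^p)^(q/p)`, and since `p ∣ n` the binomial theorem gives the
symmetric function as `±C(q/p, n/p)`.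
-/

open Finset Polynomial

theorem Polynomial.coeff_X_pow_sub_C_pow {R : Type*} [CommRing R] (a : R) {p : ℕ} (hp : 0 < p)
    {d m : ℕ} (hm : m ≤ d) :
    ((X ^ p - C a) ^ d).coeff (p * (d - m)) = (-a) ^ m * d.choose m := by
  have hexpand : (X ^ p - C a) ^ d = expand R p ((X + C (-a)) ^ d) := by
    simp [sub_eq_add_neg]
  rw [hexpand, mul_comm, coeff_expand_mul hp, coeff_X_add_C_pow, Nat.sub_sub_self hm,
    Nat.choose_symm hm]

namespace AddChar

theorem map_sum_eq_prod {A M ι : Type*} [AddCommMonoid A] [CommMonoid M] (ψ : AddChar A M)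
    (s : Finset ι) (f : ι → A) : ψ (∑ i ∈ s, f i) = ∏ i ∈ s, ψ (f i) := by
  induction s using Finset.cons_induction with
  | empty => simp
  | cons a s ha ih => rw [sum_cons, prod_cons, map_add_eq_mul, ih]

variable {F R : Type*} [Ring F] {p : ℕ} [CharP F p]

theorem pow_char_eq_one [Monoid R] (ψ : AddChar F R) (a : F) : ψ a ^ p = 1 := by
  rw [← map_nsmul_eq_pow, nsmul_eq_mul, CharP.cast_eq_zero, zero_mul, map_zero_eq_one]

theorem isPrimitiveRoot_of_ne_one [CommMonoid R] (hp : p.Prime) (ψ : AddChar F R) {a : F}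
    (ha : ψ a ≠ 1) : IsPrimitiveRoot (ψ a) p :=
  haveI := Fact.mk hp
  orderOf_eq_prime (ψ.pow_char_eq_one a) ha ▸ IsPrimitiveRoot.orderOf _

theorem card_fiber_eq_card_ker [Fintype F] [Monoid R] [DecidableEq R] (ψ : AddChar F R) (c : F) :
    #{a | ψ a = ψ c} = #{a | ψ a = 1} :=
  card_equiv (Equiv.subRight c) fun a => by
    simp only [mem_filter, mem_univ, true_and, Equiv.subRight_apply]
    conv_lhs => rw [← sub_add_cancel a c, map_add_eq_mul]
    exact (ψ.val_isUnit c).mul_eq_right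

variable [Fintype F] [CommRing R] [IsDomain R] [DecidableEq R]

theorem prod_X_add_C_eq_pow (hp : p.Prime) {ψ : AddChar F R} (hψ : ψ ≠ 1) :
    ∏ a, (X + C (ψ a)) = (X ^ p - C ((-1) ^ p)) ^ #{a | ψ a = 1} := by
  have := Fact.mk hp
  obtain ⟨a₀, ha₀⟩ := ne_one_iff.1 hψ
  have hζ := ψ.isPrimitiveRoot_of_ne_one hp ha₀
  have himage : univ.image ψ = (range p).image (ψ a₀ ^ ·) := by
    ext z
    simp only [mem_image, mem_univ, true_and, mem_range]
    constructor
    · rintro ⟨a, rfl⟩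
      exact hζ.eq_pow_of_pow_eq_one (ψ.pow_char_eq_one a)
    · rintro ⟨i, -, rfl⟩
      exact ⟨i • a₀, map_nsmul_eq_pow ψ i a₀⟩
  have hfiber : ∀ z ∈ univ.image ψ, #{a | ψ a = z} = #{a | ψ a = 1} := by
    simp only [mem_image, mem_univ, true_and, forall_exists_index, forall_apply_eq_imp_iff]
    exact ψ.card_fiber_eq_card_ker
  rw [prod_comp (fun z => X + C z) ψ, prod_congr rfl fun z hz => by rw [hfiber z hz], prod_pow,
    himage, prod_image hζ.injOn_pow, X_pow_sub_C_eq_prod hζ hp.pos (α := -1) rfl]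
  simp

theorem card_eq_mul_card_ker (hp : p.Prime) {ψ : AddChar F R} (hψ : ψ ≠ 1) :
    Fintype.card F = p * #{a | ψ a = 1} := by
  have h := congrArg natDegree (prod_X_add_C_eq_pow hp hψ)
  rw [natDegree_prod_of_monic _ _ fun a _ => monic_X_add_C _, natDegree_pow,
    natDegree_X_pow_sub_C, mul_comm] at h
  simpa only [natDegree_X_add_C, sum_const, card_univ, smul_eq_mul, mul_one] using h

theorem sum_powersetCard_prod_eq (hp : p.Prime) {ψ : AddChar F R} (hψ : ψ ≠ 1) {n : ℕ}
    (hpn : p ∣ n) (hn : n ≤ Fintype.card F) :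
    ∑ S ∈ powersetCard n univ, ∏ x ∈ S, ψ x
      = (-1) ^ (n + n / p) * ((Fintype.card F / p).choose (n / p) : R) := by
  obtain ⟨m, rfl⟩ := hpn
  have hq := card_eq_mul_card_ker hp hψ
  have hm : m ≤ #{a | ψ a = 1} := Nat.le_of_mul_le_mul_left (hq ▸ hn) hp.pos
  have hcoeff := prod_X_add_C_coeff univ (fun a => ψ a) (Nat.sub_le (Fintype.card F) (p * m))
  rw [card_univ, Nat.sub_sub_self hn, prod_X_add_C_eq_pow hp hψ, hq, ← Nat.mul_sub,
    coeff_X_pow_sub_C_pow _ hp.pos hm] at hcoeff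
  rw [← hcoeff, hq, Nat.mul_div_cancel_left _ hp.pos, Nat.mul_div_cancel_left _ hp.pos,
    neg_eq_neg_one_mul, mul_pow, ← pow_mul, ← pow_add, add_comm]

end AddChar

section SubsetSums

variable {F : Type*}

/-- The paper's `M(n, b)`. -/
noncomputable def subsetSumCount [AddCommMonoid F] (n : ℕ) (b : F) : ℕ :=
  Nat.card {S : Finset F // S.card = n ∧ ∑ x ∈ S, x = b}

theorem subsetSumCount_mul [DivisionRing F] (n : ℕ) {u : F} (hu : u ≠ 0) (b : F) :
    subsetSumCount n (u * b) = subsetSumCount n b :=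
  Nat.card_congr ((Equiv.mulLeft₀ u hu).finsetCongr.subtypeEquiv fun S => by
    simp only [Equiv.finsetCongr_apply, card_map, sum_map, Equiv.coe_toEmbedding,
      Equiv.mulLeft₀_apply]
    rw [← Finset.mul_sum, mul_right_inj' hu]).symm

theorem subsetSumCount_eq_subsetSumCount_one [DivisionRing F] (n : ℕ) {b : F} (hb : b ≠ 0) :
    subsetSumCount n b = subsetSumCount n (1 : F) := by
  simpa using subsetSumCount_mul n hb 1

variable [AddCommMonoid F] [Fintype F] [DecidableEq F]

theorem subsetSumCount_eq_card (n : ℕ) (b : F) :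
    subsetSumCount n b = #{S ∈ powersetCard n univ | ∑ x ∈ S, x = b} := by
  rw [subsetSumCount, Nat.card_eq_fintype_card, Fintype.card_subtype]
  congr 1
  ext S
  simp [mem_powersetCard]

theorem sum_subsetSumCount (n : ℕ) : ∑ b : F, subsetSumCount n b = (Fintype.card F).choose n := by
  simp_rw [subsetSumCount_eq_card]
  rw [← card_eq_sum_card_fiberwise fun _ _ => mem_univ _, card_powersetCard, card_univ]

theorem sum_subsetSumCount_mul_addChar {R : Type*} [CommSemiring R] (ψ : AddChar F R) (n : ℕ) :
    ∑ b, (subsetSumCount n b : R) * ψ b = ∑ S ∈ powersetCard n univ, ∏ x ∈ S, ψ x := by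
  simp_rw [← ψ.map_sum_eq_prod]
  rw [← sum_fiberwise_of_maps_to (g := fun S => ∑ x ∈ S, x) fun _ _ => mem_univ _]
  refine sum_congr rfl fun b _ => ?_
  rw [sum_congr rfl fun S hS => congrArg ψ (mem_filter.1 hS).2, sum_const, nsmul_eq_mul,
    subsetSumCount_eq_card]

end SubsetSums

section FiniteField

variable {F : Type*} [Field F] [Fintype F] [DecidableEq F]

theorem subsetSumCount_zero_add_mul_one (n : ℕ) :
    subsetSumCount n (0 : F) + (Fintype.card F - 1) * subsetSumCount n (1 : F)
      = (Fintype.card F).choose n := by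
  rw [← sum_subsetSumCount, ← add_sum_erase _ _ (mem_univ 0),
    sum_congr rfl fun b hb => subsetSumCount_eq_subsetSumCount_one n (ne_of_mem_erase hb),
    sum_const, card_erase_of_mem (mem_univ 0), card_univ, smul_eq_mul]

theorem subsetSumCount_zero_sub_one {R : Type*} [CommRing R] [IsDomain R] {ψ : AddChar F R}
    (hψ : ψ ≠ 1) (n : ℕ) :
    (subsetSumCount n (0 : F) : R) - subsetSumCount n (1 : F)
      = ∑ b, (subsetSumCount n b : R) * ψ b := by
  have hsum : ∑ b ∈ univ.erase 0, ψ b = -1 := by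
    have h := AddChar.sum_eq_zero_of_ne_one hψ
    rw [← add_sum_erase _ _ (mem_univ 0), AddChar.map_zero_eq_one] at h
    linear_combination h
  rw [← add_sum_erase _ _ (mem_univ 0), AddChar.map_zero_eq_one,
    sum_congr rfl fun b hb => by rw [subsetSumCount_eq_subsetSumCount_one n (ne_of_mem_erase hb)],
    ← mul_sum, hsum]
  ring

end FiniteField

open scoped Classical in
theorem stmt_3_general (p q n : ℕ) (hp : p.Prime)
    (F : Type*) [Field F] [Fintype F] (hF : Fintype.card F = q) (hchar : CharP F p)
    (hnq : n ≤ q) (hpn : p ∣ n) (b : F) :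
    (Nat.card {S : Finset F // S.card = n ∧ ∑ x ∈ S, x = b} : ℚ)
      = (1 / q) * q.choose n
        + (-1 : ℚ) ^ (n + n / p) * ((if b = 0 then (q : ℚ) - 1 else -1) / q)
            * ((q / p).choose (n / p)) := by
  subst hF
  obtain ⟨ψ, hψ⟩ := AddChar.exists_apply_ne_zero.2 (one_ne_zero (α := F))
  have hψ1 : ψ ≠ 1 := fun h => hψ (by rw [h, AddChar.one_apply])
  have hq : (Fintype.card F : ℚ) ≠ 0 := Nat.cast_ne_zero.2 Fintype.card_ne_zero
  have htotal : (subsetSumCount n (0 : F) : ℚ) + (Fintype.card F - 1) * subsetSumCount n (1 : F)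
      = (Fintype.card F).choose n := by
    rw [← Nat.cast_pred Fintype.card_pos]
    exact_mod_cast subsetSumCount_zero_add_mul_one (F := F) n
  have hdiff : (subsetSumCount n (0 : F) : ℚ) - subsetSumCount n (1 : F)
      = (-1) ^ (n + n / p) * (Fintype.card F / p).choose (n / p) := by
    apply Rat.cast_injective (α := ℂ)
    push_cast
    have := hchar
    rw [subsetSumCount_zero_sub_one hψ1, sum_subsetSumCount_mul_addChar,
      AddChar.sum_powersetCard_prod_eq hp hψ1 hpn hnq]
  change (subsetSumCount n b : ℚ) = _
  split_ifs with hb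
  · subst hb
    field_simp
    linear_combination htotal + (Fintype.card F - 1 : ℚ) * hdiff
  · rw [subsetSumCount_eq_subsetSumCount_one n hb]
    field_simp
    linear_combination htotal - hdiff

open scoped Classical in
theorem stmt_3 (p e q n : ℕ) (hp : p.Prime) (he : 0 < e) (hq : q = p ^ e)
    (F : Type*) [Field F] [Fintype F] (hF : Fintype.card F = q) (hchar : CharP F p)
    (hn1 : 1 ≤ n) (hnq : n ≤ q) (hpn : p ∣ n) (b : F) :
    (Nat.card {S : Finset F // S.card = n ∧ ∑ x ∈ S, x = b} : ℚ)
      = (1 / q) * q.choose n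
        + (-1 : ℚ) ^ (n + n / p) * ((if b = 0 then (q : ℚ) - 1 else -1) / q)
            * ((q / p).choose (n / p)) :=
  stmt_3_general p q n hp F hF hchar hnq hpn b
end

section
/- Let q = p^e with p an odd prime, b ∈ F_q with b ≠ 0, and 0 ≤ k ≤ q. The number of tuples (a_2,...,a_q) ∈ F_q^{q-1} such that x^q - b x^{q-1} + a_2 x^{q-2} + ... + a_q has exactly k distinct roots in F_q equals 0 if k = q, and equals (1/q) * C(q,k) * ((q-1)^{q-k} - (-1)^{q-k}) if k ≤ q-1. -/
/-!
Because `α ^ q = α` on `𝔽_q` and `∑ α, α ^ i` vanishes for `i < q - 1` and equals `-1` for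
`i = q - 1` (here `q > 2` as `p` is odd), the function `α ↦ f(α)` has value sum `b` for every `a`.
A polynomial of degree `< q` vanishing on `𝔽_q` is zero, so `a ↦ (α ↦ f(α))` is injective, and
since both sides have `q ^ (q - 1)` elements it is a bijection onto the functions
`h : 𝔽_q → 𝔽_q` with `∑ α, h α = b`.
Such an `h` with exactly `k` zeros is a choice of the zero set together with a `(q - k)`-tuple of
nonzero elements with sum `b`. If `N_m(c)` counts nonzero `m`-tuples with sum `c`, then
`N_{m+1}(c) + N_m(c) = (q - 1) ^ m`, as the last coordinate of such a tuple is forced, and solving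
this recursion gives `q N_m(c) = (q - 1) ^ m - (-1) ^ m` for `c ≠ 0`.
-/

open Finset Polynomial

theorem Nat.card_subtype_and_add_card_subtype_and_not {α : Type*} [Finite α] (A B : α → Prop) :
    Nat.card {x // A x ∧ B x} + Nat.card {x // A x ∧ ¬B x} = Nat.card {x // A x} := by
  have := Fintype.ofFinite α
  classical
  simp only [Nat.card_eq_fintype_card, Fintype.card_subtype]
  rw [← card_filter_add_card_filter_not (s := univ.filter A) B, filter_filter, filter_filter]

section TuplesWithSum

variable {G : Type*} [AddCommGroup G] {ι κ : Type*} [Fintype ι] [Fintype κ]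

def tuplesWithSumCongr (P : G → Prop) (c : G) (e : ι ≃ κ) :
    {x : ι → G // (∀ i, P (x i)) ∧ ∑ i, x i = c} ≃
      {x : κ → G // (∀ i, P (x i)) ∧ ∑ i, x i = c} :=
  (e.arrowCongr (Equiv.refl G)).subtypeEquiv fun x => by
    simp [e.symm.forall_congr_left, e.symm.sum_comp]

def optionTuplesWithSumEquiv (P : G → Prop) (c : G) :
    {x : Option ι → G // (∀ i, P (x i)) ∧ ∑ i, x i = c} ≃
      {y : ι → G // (∀ i, P (y i)) ∧ P (c - ∑ i, y i)} where
  toFun x := ⟨fun i => x.1 (some i), fun i => x.2.1 _, by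
    simpa [← x.2.2, Fintype.sum_option] using x.2.1 none⟩
  invFun y := ⟨fun o => o.elim (c - ∑ i, y.1 i) y.1,
    by simpa [Option.forall, and_comm] using y.2, by simp [Fintype.sum_option]⟩
  left_inv x := by ext (_ | i) <;> simp [← x.2.2, Fintype.sum_option]
  right_inv y := rfl

theorem card_tuplesWithSum [Fintype G] [Nonempty ι] (c : G) :
    Nat.card {x : ι → G // ∑ i, x i = c} = Fintype.card G ^ (Fintype.card ι - 1) := by
  classical
  obtain ⟨i₀⟩ := ‹Nonempty ι›
  calc Nat.card {x : ι → G // ∑ i, x i = c}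
      = Nat.card {x : ι → G // (∀ _, True) ∧ ∑ i, x i = c} := by simp
    _ = Nat.card {y : {i // i ≠ i₀} → G // (∀ _, True) ∧ True} :=
      Nat.card_congr <|
        (tuplesWithSumCongr (fun _ => True) c (Equiv.optionSubtypeNe i₀)).symm.trans
          (optionTuplesWithSumEquiv (fun _ => True) c)
    _ = Fintype.card G ^ (Fintype.card ι - 1) := by simp [Fintype.card_subtype_compl]

theorem card_pi_ne_zero {M : Type*} [Zero M] [Fintype M] :
    Nat.card {x : ι → M // ∀ i, x i ≠ 0} = (Fintype.card M - 1) ^ Fintype.card ι := by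
  classical
  rw [Nat.card_congr (Equiv.subtypePiEquivPi (p := fun _ (m : M) => m ≠ 0))]
  simp

theorem card_nonzero_tuplesWithSum_option_add [Fintype G] (c : G) :
    Nat.card {x : Option ι → G // (∀ i, x i ≠ 0) ∧ ∑ i, x i = c} +
      Nat.card {x : ι → G // (∀ i, x i ≠ 0) ∧ ∑ i, x i = c} =
      (Fintype.card G - 1) ^ Fintype.card ι := by
  have hlast (y : ι → G) : c - ∑ i, y i ≠ 0 ↔ ¬∑ i, y i = c := sub_ne_zero.trans ne_comm
  rw [Nat.card_congr (optionTuplesWithSumEquiv (· ≠ 0) c)]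
  simp only [hlast]
  rw [add_comm, Nat.card_subtype_and_add_card_subtype_and_not, card_pi_ne_zero]

theorem card_nonzero_tuplesWithSum [Fintype G] [DecidableEq G] (n : ℕ) (c : G) :
    (Fintype.card G : ℚ) * Nat.card {x : Fin n → G // (∀ i, x i ≠ 0) ∧ ∑ i, x i = c} =
      (Fintype.card G - 1 : ℚ) ^ n +
        (-1) ^ n * ((if c = 0 then (Fintype.card G : ℚ) else 0) - 1) := by
  induction n generalizing c with
  | zero => by_cases hc : c = 0 <;> simp [hc, eq_comm]
  | succ n ih =>
    have hrec := card_nonzero_tuplesWithSum_option_add (ι := Fin n) c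
    rw [← Nat.card_congr (tuplesWithSumCongr (· ≠ 0) c (finSuccEquiv n)),
      Fintype.card_fin] at hrec
    have hrecℚ := congrArg (Nat.cast : ℕ → ℚ) hrec
    push_cast [Nat.cast_sub Fintype.card_pos] at hrecℚ
    linear_combination (Fintype.card G : ℚ) * hrecℚ - ih c

def zeroSetEquiv [DecidableEq ι] (S : Finset ι) (c : G) :
    {h : ι → G // (∀ i, h i = 0 ↔ i ∈ S) ∧ ∑ i, h i = c} ≃
      {x : {i // i ∉ S} → G // (∀ i, x i ≠ 0) ∧ ∑ i, x i = c} where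
  toFun h := ⟨fun i => h.1 i, fun i => (h.2.1 i).not.2 i.2, by
    have hsum := h.2.2
    rw [← Fintype.sum_subtype_add_sum_subtype (· ∈ S)] at hsum
    simpa [fun i : {i // i ∈ S} => (h.2.1 i).2 i.2] using hsum⟩
  invFun x := ⟨fun i => if hi : i ∈ S then 0 else x.1 ⟨i, hi⟩, fun i => by
    by_cases hi : i ∈ S <;> simp [hi, x.2.1 ⟨i, _⟩], by
    rw [← Fintype.sum_subtype_add_sum_subtype (· ∈ S)]
    simpa [fun i : {i // i ∉ S} => i.2] using x.2.2⟩
  left_inv h := by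
    ext i
    by_cases hi : i ∈ S <;> simp [hi, (h.2.1 i).2]
  right_inv x := by ext i; simp [i.2]

theorem card_tuplesWithSum_card_zeros [Fintype G] (c : G) (k : ℕ) :
    Nat.card {h : ι → G // ∑ i, h i = c ∧ Nat.card {i // h i = 0} = k} =
      (Fintype.card ι).choose k *
        Nat.card {x : Fin (Fintype.card ι - k) → G // (∀ i, x i ≠ 0) ∧ ∑ i, x i = c} := by
  classical
  have hcard (h : ι → G) : Nat.card {i // h i = 0} = #{i | h i = 0} := by
    rw [Nat.card_eq_fintype_card, Fintype.card_subtype]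
  have hfiber : ∀ S ∈ powersetCard k univ,
      #{h ∈ ({h | ∑ i, h i = c ∧ Nat.card {i // h i = 0} = k} : Finset (ι → G)) |
          ({i | h i = 0} : Finset ι) = S} =
        Nat.card {x : Fin (Fintype.card ι - k) → G // (∀ i, x i ≠ 0) ∧ ∑ i, x i = c} := by
    intro S hS
    rw [mem_powersetCard] at hS
    calc _ = Nat.card {h : ι → G // (∀ i, h i = 0 ↔ i ∈ S) ∧ ∑ i, h i = c} := by
          rw [Nat.card_eq_fintype_card, Fintype.card_subtype, filter_filter]
          congr 1
          ext h
          have hzeros : ({i | h i = 0} : Finset ι) = S ↔ ∀ i, h i = 0 ↔ i ∈ S := by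
            simp [Finset.ext_iff]
          simp only [mem_filter, mem_univ, true_and, hzeros, hcard]
          constructor
          · rintro ⟨⟨hsum, -⟩, hzero⟩
            exact ⟨hzero, hsum⟩
          · rintro ⟨hzero, hsum⟩
            exact ⟨⟨hsum, by rw [hzeros.2 hzero, hS.2]⟩, hzero⟩
      _ = Nat.card {x : {i // i ∉ S} → G // (∀ i, x i ≠ 0) ∧ ∑ i, x i = c} :=
          Nat.card_congr (zeroSetEquiv S c)
      _ = _ := by
          have hcompl : Fintype.card {i // i ∉ S} = Fintype.card ι - k := by
            simp [Fintype.card_subtype_compl, hS.2]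
          exact Nat.card_congr (tuplesWithSumCongr (· ≠ 0) c (Fintype.equivFinOfCardEq hcompl))
  rw [Nat.card_eq_fintype_card, Fintype.card_subtype,
    card_eq_sum_card_fiberwise (f := fun h : ι → G => ({i | h i = 0} : Finset ι))
      (t := powersetCard k univ) (fun h hh => by simp_all),
    sum_congr rfl hfiber, sum_const, card_powersetCard, card_univ, smul_eq_mul]

end TuplesWithSum

theorem injective_sum_mul_pow {R : Type*} [CommRing R] [IsDomain R] [Fintype R] {n : ℕ}
    (hn : n ≤ Fintype.card R) :
    Function.Injective fun (a : Fin n → R) (α : R) => ∑ i, a i * α ^ (i : ℕ) := by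
  intro a a' h
  have hpoly : ∑ i, C (a i) * X ^ (i : ℕ) = ∑ i, C (a' i) * X ^ (i : ℕ) := by
    refine eq_of_degree_sub_lt_of_eval_finset_eq univ ?_ fun α _ => by
      simpa [eval_finsetSum] using congrFun h α
    rw [← sum_sub_distrib]
    simp_rw [← sub_mul, ← C_sub]
    exact (degree_sum_fin_lt _).trans_le (by simpa using hn)
  ext i
  simpa [finsetSum_coeff, coeff_C_mul_X_pow, Fin.val_inj] using congr_arg (coeff · i) hpoly

section FiniteField

variable {F : Type*} [Field F] [Fintype F]

theorem FiniteField.sum_pow_card_sub_one : ∑ α : F, α ^ (Fintype.card F - 1) = -1 := by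
  classical
  have hq : Fintype.card F - 1 ≠ 0 := by have := Fintype.one_lt_card (α := F); omega
  have hpow (α : F) : α ^ (Fintype.card F - 1) = if α = 0 then 0 else 1 := by
    split_ifs with hα
    · rw [hα, zero_pow hq]
    · exact FiniteField.pow_card_sub_one_eq_one α hα
  simp [hpow, sum_ite, filter_ne', Nat.cast_sub Fintype.card_pos]

-- `a i` is the coefficient of `x ^ i`, i.e. the paper's `a_{q-i}`.
noncomputable def polyFun (b : F) (a : Fin (Fintype.card F - 1) → F) (α : F) : F :=
  α ^ Fintype.card F - b * α ^ (Fintype.card F - 1) + ∑ i, a i * α ^ (i : ℕ)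

theorem sum_polyFun (hF : 2 < Fintype.card F) (b : F) (a : Fin (Fintype.card F - 1) → F) :
    ∑ α, polyFun b a α = b := by
  have hfrob : ∑ α : F, α ^ Fintype.card F = 0 := by
    simp_rw [FiniteField.pow_card]
    simpa using FiniteField.sum_pow_lt_card_sub_one F 1 (by omega)
  have hlow : ∑ α : F, ∑ i, a i * α ^ (i : ℕ) = 0 := by
    rw [sum_comm]
    refine sum_eq_zero fun i _ => ?_
    rw [← mul_sum, FiniteField.sum_pow_lt_card_sub_one F _ i.2, mul_zero]
  simp only [polyFun, sum_add_distrib, sum_sub_distrib, ← mul_sum, hfrob, hlow,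
    FiniteField.sum_pow_card_sub_one]
  ring

theorem injective_polyFun (b : F) : Function.Injective (polyFun b) := by
  intro a a' h
  refine injective_sum_mul_pow (by omega) (funext fun α => ?_)
  simpa [polyFun] using congrFun h α

theorem bijective_polyFun_sum_eq (hF : 2 < Fintype.card F) (b : F) :
    Function.Bijective fun a =>
      (⟨polyFun b a, sum_polyFun hF b a⟩ : {h : F → F // ∑ α, h α = b}) :=
  Function.Injective.bijective_of_nat_card_le
    (fun _ _ h => injective_polyFun b (congrArg Subtype.val h)) (by simp [card_tuplesWithSum])

theorem card_polyFun_zeros_eq_card_sum_eq (hF : 2 < Fintype.card F) (b : F) (k : ℕ) :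
    Nat.card {a // Nat.card {α // polyFun b a α = 0} = k} =
      Nat.card {h : F → F // ∑ α, h α = b ∧ Nat.card {α // h α = 0} = k} :=
  Nat.card_congr <|
    ((Equiv.ofBijective _ (bijective_polyFun_sum_eq hF b)).subtypeEquiv fun _ => Iff.rfl).trans
      (Equiv.subtypeSubtypeEquivSubtypeInter _ fun h => Nat.card {α // h α = 0} = k)

end FiniteField

theorem stmt_6_general (p e q k : ℕ) (hodd : Odd p) (hq : q = p ^ e)
    (F : Type*) [Field F] [Fintype F] (hF : Fintype.card F = q)
    (b : F) (hb : b ≠ 0) :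
    (Nat.card {a : Fin (q - 1) → F //
        Nat.card {α : F //
          α ^ q - b * α ^ (q - 1) + ∑ i : Fin (q - 1), a i * α ^ (i : ℕ) = 0} = k} : ℚ)
      = if k = q then 0
        else (1 / q) * (q.choose k) * (((q : ℚ) - 1) ^ (q - k) - (-1 : ℚ) ^ (q - k)) := by
  classical
  subst hF
  have hq3 : 2 < Fintype.card F := by
    obtain ⟨m, hm⟩ : Odd (Fintype.card F) := hq ▸ hodd.pow
    have := Fintype.one_lt_card (α := F)
    omega
  have hN := card_nonzero_tuplesWithSum (Fintype.card F - k) b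
  rw [if_neg hb] at hN
  change (Nat.card {a // Nat.card {α // polyFun b a α = 0} = k} : ℚ) = _
  rw [card_polyFun_zeros_eq_card_sum_eq hq3, card_tuplesWithSum_card_zeros]
  have hq0 : (Fintype.card F : ℚ) ≠ 0 := by positivity
  rw [ite_eq_right_iff.2 fun hk => by simp [hk]]
  push_cast
  field_simp
  linear_combination (Fintype.card F).choose k * hN

theorem stmt_6 (p e q k : ℕ) (hp : p.Prime) (hodd : Odd p) (he : 0 < e) (hq : q = p ^ e)
    (F : Type*) [Field F] [Fintype F] (hF : Fintype.card F = q)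
    (b : F) (hb : b ≠ 0) (hk : k ≤ q) :
    (Nat.card {a : Fin (q - 1) → F //
        Nat.card {α : F //
          α ^ q - b * α ^ (q - 1) + ∑ i : Fin (q - 1), a i * α ^ (i : ℕ) = 0} = k} : ℚ)
      = if k = q then 0
        else (1 / q) * (q.choose k) * (((q : ℚ) - 1) ^ (q - k) - (-1 : ℚ) ^ (q - k)) :=
  stmt_6_general p e q k hodd hq F hF b hb
end

section
/- Let F_q be a finite field of odd order, n ≥ 2, a_1,...,a_n ∈ F_q^*, b_1,...,b_n ∈ F_q not all zero, and a_0, b_0 ∈ F_q. Set a = a_1···a_n, b = b_1^2 a_1^{-1} + ... + b_n^2 a_n^{-1}, c = b_0^2 - a_0 b. If b = 0 and c ≠ 0, then the number of common solutions (x_1,...,x_n) ∈ F_q^n of the system a_1 x_1^2 + ... + a_n x_n^2 = a_0 and b_1 x_1 + ... + b_n x_n = b_0 equals q^{n-2}. -/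
/-!
Put `Q x = ∑ aᵢ xᵢ²`, `L x = ∑ bᵢ xᵢ` and `v = (bᵢ / aᵢ)ᵢ`. Then `Q v = b = 0`, and the polar form
of `Q` at `v` is `2 L`, so `Q (x + t v) = Q x + 2 t L x` and `L (x + t v) = L x`. On the hyperplane
`L = b₀`, where `b₀ ≠ 0` because `c = b₀² ≠ 0`, moving along the isotropic line `F_q v` changes `Q`
by `2 t b₀` and so meets the level set `Q = a₀` exactly once. Hence the hyperplane, of size
`q ^ (n - 1)`, is in bijection with the solution set times `F_q`.
-/

open Finset Module QuadraticMap

theorem Module.Dual.natCard_fiber_of_ne_zero {K V : Type*} [Field K] [Finite K] [AddCommGroup V]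
    [Module K V] [Module.Finite K V] {f : Dual K V} (hf : f ≠ 0) (d : K) :
    Nat.card {x // f x = d} = Nat.card K ^ (finrank K V - 1) := by
  have hker := Dual.finrank_ker_add_one_of_ne_zero hf
  refine (Nat.card_congr (AddMonoidHom.fiberEquivKerOfSurjective (f := f.toAddMonoidHom)
    (LinearMap.surjective hf) d)).trans ?_
  change Nat.card (LinearMap.ker f) = _
  rw [Module.natCard_eq_pow_finrank (K := K)]
  congr 1
  omega

theorem FiniteField.two_ne_zero_of_odd_card {F : Type*} [Field F] [Fintype F]
    (hq : Odd (Fintype.card F)) : (2 : F) ≠ 0 :=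
  Ring.two_ne_zero fun h => by
    have := FiniteField.even_card_of_char_two h
    rw [Nat.odd_iff] at hq
    omega

namespace QuadraticMap

variable {K V : Type*} [Field K] [AddCommGroup V] [Module K V] {Q : QuadraticMap K V K} {v : V}

theorem map_add_smul_of_isotropic (hv : Q v = 0) (x : V) (t : K) :
    Q (x + t • v) = Q x + t * polar Q v x := by
  rw [QuadraticMap.map_add Q, QuadraticMap.map_smul, hv, polar_smul_right, polar_comm]
  simp

theorem polar_add_smul_of_isotropic (hv : Q v = 0) (x : V) (t : K) :
    polar Q v (x + t • v) = polar Q v x := by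
  rw [polar_add_right, polar_smul_right, polar_self, hv]
  simp

def isotropicTranslateEquiv (hv : Q v = 0) (α : K) {β : K} (hβ : β ≠ 0) :
    {x // Q x = α ∧ polar Q v x = β} × K ≃ {x // polar Q v x = β} where
  toFun p := ⟨p.1 + p.2 • v, by rw [polar_add_smul_of_isotropic hv, p.1.2.2]⟩
  invFun y := (⟨y + ((α - Q y) / β) • v, by
      rw [map_add_smul_of_isotropic hv, polar_add_smul_of_isotropic hv, y.2]
      exact ⟨by field_simp; ring, rfl⟩⟩, (Q y - α) / β)
  left_inv := by
    rintro ⟨⟨x, hQx, hx⟩, t⟩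
    have hshift : Q (x + t • v) = α + t * β := by rw [map_add_smul_of_isotropic hv, hQx, hx]
    ext
    · simp only [hshift]
      rw [add_assoc, ← add_smul]
      field_simp
      simp
    · simp only [hshift]
      field_simp
      ring
  right_inv y := by
    ext
    simp only
    rw [add_assoc, ← add_smul]
    field_simp
    simp

theorem natCard_level_polar_fiber_mul_natCard [Finite K] [Module.Finite K V] (hv : Q v = 0) (α : K) {β : K}
    (hβ : β ≠ 0) (hQv : polarBilin Q v ≠ 0) :
    Nat.card {x // Q x = α ∧ polar Q v x = β} * Nat.card K = Nat.card K ^ (finrank K V - 1) := by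
  rw [← Nat.card_prod, Nat.card_congr (isotropicTranslateEquiv hv α hβ)]
  exact Dual.natCard_fiber_of_ne_zero hQv β

theorem polar_weightedSumSquares {ι R : Type*} [Fintype ι] [CommRing R] (w : ι → R)
    (x y : ι → R) : polar (weightedSumSquares R w) x y = 2 * ∑ i, w i * x i * y i := by
  simp only [polar, weightedSumSquares_apply, smul_eq_mul, Pi.add_apply, ← sum_sub_distrib, mul_sum]
  exact sum_congr rfl fun i _ => by ring

end QuadraticMap

theorem stmt_8 (F : Type*) [Field F] [Fintype F] (hq : Odd (Fintype.card F))
    (n : ℕ) (hn : 2 ≤ n) (a b : Fin n → F) (ha : ∀ i, a i ≠ 0) (hb : ∃ i, b i ≠ 0)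
    (a0 b0 : F)
    (hB : ∑ i, (b i) ^ 2 * (a i)⁻¹ = 0)
    (hc : b0 ^ 2 - a0 * (∑ i, (b i) ^ 2 * (a i)⁻¹) ≠ 0) :
    Nat.card {x : Fin n → F //
        (∑ i, a i * (x i) ^ 2) = a0 ∧ (∑ i, b i * x i) = b0}
      = Fintype.card F ^ (n - 2) := by
  obtain ⟨j, hj⟩ := hb
  have h2 : (2 : F) ≠ 0 := FiniteField.two_ne_zero_of_odd_card hq
  have hb0 : b0 ≠ 0 := by simpa [hB] using hc
  set Q := weightedSumSquares F a
  set v : Fin n → F := fun i => b i / a i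
  have hpolar (x : Fin n → F) : polar Q v x = 2 * ∑ i, b i * x i := by
    rw [polar_weightedSumSquares]
    congr 1
    exact sum_congr rfl fun i _ => by simp only [v]; field_simp [ha i]
  have hv : Q v = 0 := by
    rw [← hB, weightedSumSquares_apply]
    exact sum_congr rfl fun i _ => by simp only [v, smul_eq_mul]; field_simp [ha i]
  have hQv : polarBilin Q v ≠ 0 := fun h => by
    have := LinearMap.congr_fun h (Pi.single j 1)
    simp [hpolar, Pi.single_apply, h2, hj] at this
  have hcard := natCard_level_polar_fiber_mul_natCard hv a0 (mul_ne_zero h2 hb0) hQv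
  rw [Module.finrank_fin_fun, Nat.card_eq_fintype_card (α := F)] at hcard
  have hsol (x : Fin n → F) : (∑ i, a i * x i ^ 2 = a0 ∧ ∑ i, b i * x i = b0) ↔
      (Q x = a0 ∧ polar Q v x = 2 * b0) := by
    simp only [hpolar, mul_right_inj' h2, Q, weightedSumSquares_apply, smul_eq_mul, ← pow_two]
  rw [Nat.card_congr (Equiv.subtypeEquivRight hsol)]
  apply Nat.eq_of_mul_eq_mul_right (Fintype.card_pos_iff.2 ⟨(0 : F)⟩)
  rw [hcard, ← pow_succ]
  congr 1
  omega
end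

section
/- Let F_q be a finite field of odd order, n ≥ 2 odd, a_1,...,a_n ∈ F_q^*, b_1,...,b_n ∈ F_q not all zero, a_0, b_0 ∈ F_q. Set a = a_1···a_n, b = Σ b_i^2 a_i^{-1}, c = b_0^2 - a_0 b. If b ≠ 0 and c = 0, then the number of common solutions in F_q^n of a_1 x_1^2 + ... + a_n x_n^2 = a_0 and b_1 x_1 + ... + b_n x_n = b_0 equals q^{n-2} + q^{(n-3)/2} (q-1) χ((-1)^{(n-1)/2} a b), where χ is the quadratic character of F_q. -/
open scoped Classical in
/-- The quadratic character of a finite field. -/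
noncomputable def quadChar (F : Type*) [Field F] (x : F) : ℤ :=
  if x = 0 then 0 else if IsSquare x then 1 else -1

/-!
Write `Q x = ∑ aᵢ xᵢ²`, `L x = ∑ bᵢ xᵢ`, `B = ∑ bᵢ² / aᵢ` and `w = (bᵢ / aᵢ)ᵢ`. Then
`Q (x + t w) = Q x + 2 t L x + t² B` and `L (x + t w) = L x + t B`, so translating along `w`
moves the section `{Q = a₀, L = b₀}` onto the cone `{Q = 0, L = 0}` (as `b₀² = a₀ B`), and
splits each level set `{Q = c}` into the slices `{Q = c - B t², L = 0}`, `t ∈ F`.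
In `2k + 1` variables the level sets of `Q` have the classical sizes
`q^(2k) + q^k χ((-1)^k ∏ aᵢ) χ(c)`, by induction adding two variables at a time. Counting the
slices is therefore a convolution with `1 + χ(B) χ(·)`, and it is inverted by the Jacobi sum
`∑_c χ(c) χ(v - c) = χ(-1) (q [v = 0] - 1)`.
-/

open Finset

lemma sum_fun_fin_succ {α M : Type*} [Fintype α] [AddCommMonoid M] {m : ℕ}
    (g : (Fin (m + 1) → α) → M) :
    ∑ x, g x = ∑ t : α, ∑ z : Fin m → α, g (Fin.cons t z) :=
  (Equiv.sum_comp (Fin.consEquiv fun _ => α) g).symm.trans (Fintype.sum_prod_type _)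

namespace QuadricCount

variable {F : Type*} [Field F]

local notation "χ" => quadraticChar F
local notation "q" => (Fintype.card F : ℤ)

section Translation

variable {ι : Type*} [Fintype ι] {a : ι → F} (b : ι → F)

lemma sum_mul_add_smul_sq (ha : ∀ i, a i ≠ 0) (y : ι → F) (s : F) :
    ∑ i, a i * (y + s • fun j => b j * (a j)⁻¹) i ^ 2
      = ∑ i, a i * y i ^ 2 + 2 * s * ∑ i, b i * y i + s ^ 2 * ∑ i, b i ^ 2 * (a i)⁻¹ := by
  simp only [Pi.add_apply, Pi.smul_apply, smul_eq_mul, Finset.mul_sum, ← Finset.sum_add_distrib]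
  refine Finset.sum_congr rfl fun i _ => ?_
  field_simp [ha i]
  ring

lemma sum_mul_add_smul (y : ι → F) (s : F) :
    ∑ i, b i * (y + s • fun j => b j * (a j)⁻¹) i
      = ∑ i, b i * y i + s * ∑ i, b i ^ 2 * (a i)⁻¹ := by
  simp only [Pi.add_apply, Pi.smul_apply, smul_eq_mul, Finset.mul_sum, ← Finset.sum_add_distrib]
  refine Finset.sum_congr rfl fun i _ => by ring

end Translation

variable [Fintype F] [DecidableEq F]

section CharacterSums

lemma sum_quadraticChar_mul_self : ∑ c : F, χ c * χ c = q - 1 := by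
  have h (c : F) : χ c * χ c = 1 - if c = 0 then 1 else 0 := by
    by_cases hc : c = 0
    · simp [hc]
    · rw [if_neg hc, ← sq, quadraticChar_sq_one hc, sub_zero]
  rw [Finset.sum_congr rfl fun c _ => h c]
  simp

lemma sum_quadraticChar_mul_sub (hF : ringChar F ≠ 2) (w : F) :
    ∑ c : F, χ c * χ (w - c) = χ (-1) * ((if w = 0 then q else 0) - 1) := by
  by_cases hw : w = 0
  · have h (c : F) : χ c * χ (w - c) = χ (-1) * (χ c * χ c) := by
      rw [hw, zero_sub, neg_eq_neg_one_mul, map_mul]; ring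
    simp only [h, ← Finset.mul_sum, sum_quadraticChar_mul_self, if_pos hw]
  · have hJ : jacobiSum χ χ = -χ (-1) := by
      simpa [(quadraticChar_isQuadratic F).inv] using
        jacobiSum_nontrivial_inv (quadraticChar_ne_one hF)
    have h (c : F) : χ (w * c) * χ (w - w * c) = χ c * χ (1 - c) := by
      rw [← mul_one_sub, map_mul, map_mul]
      linear_combination χ c * χ (1 - c) * quadraticChar_sq_one hw
    rw [if_neg hw, ← Equiv.sum_comp (Equiv.mulLeft₀ w hw)]
    simp only [Equiv.mulLeft₀_apply, h]
    rw [← jacobiSum, hJ]; ring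

lemma card_mul_sq_eq (hF : ringChar F ≠ 2) {α : F} (hα : α ≠ 0) (u : F) :
    (#{x : F | α * x ^ 2 = u} : ℤ) = 1 + χ α * χ u := by
  have hset : ({x : F | α * x ^ 2 = u} : Finset F)
      = {x : F | x ^ 2 = α * u * α⁻¹ ^ 2}.toFinset := by
    ext x
    simp only [mem_filter, mem_univ, true_and, Set.mem_toFinset, Set.mem_ofPred_eq]
    constructor <;> intro h <;> [rw [← h]; rw [h]] <;> field_simp
  rw [hset, quadraticChar_card_sqrts hF, map_mul, map_mul,
    quadraticChar_sq_one' (inv_ne_zero hα)]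
  ring

lemma sum_comp_mul_sq (hF : ringChar F ≠ 2) {α : F} (hα : α ≠ 0) (f : F → ℤ) :
    ∑ x : F, f (α * x ^ 2) = ∑ u : F, f u + χ α * ∑ u : F, χ u * f u := by
  rw [← Finset.sum_fiberwise' univ (fun x => α * x ^ 2) f]
  simp only [Finset.sum_const, nsmul_eq_mul, card_mul_sq_eq hF hα, add_mul, one_mul,
    Finset.sum_add_distrib, Finset.mul_sum, mul_assoc]

lemma sum_quadraticChar_sub (hF : ringChar F ≠ 2) (r : F) : ∑ u : F, χ (r - u) = 0 :=
  (Equiv.sum_comp (Equiv.subLeft r) χ).trans (quadraticChar_sum_zero hF)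

lemma sum_sum_quadraticChar_sub_mul_sq (hF : ringChar F ≠ 2) {α β : F} (hα : α ≠ 0)
    (hβ : β ≠ 0) (c : F) :
    ∑ x : F, ∑ y : F, χ (c - α * x ^ 2 - β * y ^ 2) = q * χ (-(α * β)) * χ c := by
  have inner (x : F) : ∑ y : F, χ (c - α * x ^ 2 - β * y ^ 2)
      = χ β * χ (-1) * ((if c - α * x ^ 2 = 0 then q else 0) - 1) := by
    rw [sum_comp_mul_sq hF hβ fun v => χ (c - α * x ^ 2 - v), sum_quadraticChar_sub hF,
      sum_quadraticChar_mul_sub hF]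
    ring
  simp only [inner]
  rw [sum_comp_mul_sq hF hα fun v => χ β * χ (-1) * ((if c - v = 0 then q else 0) - 1)]
  simp only [sub_eq_zero, mul_sub, mul_ite, mul_zero, mul_one, Finset.sum_sub_distrib,
    Finset.sum_ite_eq, mem_univ, if_true, Finset.sum_const, card_univ, nsmul_eq_mul,
    ← Finset.sum_mul, quadraticChar_sum_zero hF]
  rw [show -(α * β) = -1 * α * β by ring, map_mul, map_mul]
  ring

lemma sum_quadraticChar_neg_mul_sum_quadraticChar_mul_sub (hF : ringChar F ≠ 2) (f : F → ℤ) :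
    ∑ c : F, χ (-c) * ∑ u : F, χ u * f (c - u) = χ (-1) * (q * f 0 - ∑ u : F, f u) := by
  have hconv (c : F) : ∑ u : F, χ u * f (c - u) = ∑ v : F, χ (c - v) * f v :=
    (Equiv.sum_comp (Equiv.subLeft c) _).symm.trans (by simp)
  have hpair (c v : F) : χ (-c) * χ (c - v) = χ c * χ (v - c) := by
    rw [← map_mul, ← map_mul]; ring_nf
  simp only [hconv, Finset.mul_sum, ← mul_assoc, hpair]
  rw [Finset.sum_comm]
  simp only [← Finset.sum_mul, sum_quadraticChar_mul_sub hF, mul_sub, sub_mul, mul_ite, ite_mul,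
    mul_zero, zero_mul, mul_one, Finset.sum_sub_distrib, Finset.sum_ite_eq', mem_univ, if_true,
    ← Finset.mul_sum]
  ring

lemma mul_apply_zero_of_sum_comp_sub_mul_sq (hF : ringChar F ≠ 2) {B : F} (hB : B ≠ 0)
    {f : F → ℤ} {A D : ℤ} (h : ∀ c : F, ∑ t : F, f (c - B * t ^ 2) = A + D * χ c) :
    q * f 0 = A + (q - 1) * χ B * D := by
  have hq : q ≠ 0 := by exact_mod_cast Fintype.card_ne_zero
  have hshift (c : F) : ∑ u : F, f (c - u) = ∑ u : F, f u :=
    Equiv.sum_comp (Equiv.subLeft c) f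
  have hsplit (c : F) :
      ∑ t : F, f (c - B * t ^ 2) = ∑ u : F, f u + χ B * ∑ u : F, χ u * f (c - u) := by
    rw [sum_comp_mul_sq hF hB fun u => f (c - u), hshift]
  have htotal : ∑ u : F, f u = A := by
    have hshift' (r : F) : ∑ c : F, f (c - r) = ∑ u : F, f u :=
      Equiv.sum_comp (Equiv.subRight r) f
    have := Finset.sum_congr rfl fun c (_ : c ∈ univ) => h c
    simp only [Finset.sum_comm (s := univ) (t := univ), hshift', Finset.sum_add_distrib,
      ← Finset.mul_sum, quadraticChar_sum_zero hF, Finset.sum_const, card_univ, nsmul_eq_mul,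
      mul_zero, add_zero] at this
    exact mul_left_cancel₀ hq this
  have hconv (c : F) : ∑ u : F, χ u * f (c - u) = χ B * D * χ c := by
    have := (hsplit c).symm.trans (h c)
    rw [htotal] at this
    linear_combination χ B * this - (∑ u : F, χ u * f (c - u)) * quadraticChar_sq_one hB
  have hdeconv := sum_quadraticChar_neg_mul_sum_quadraticChar_mul_sub hF f
  have hneg (c : F) : χ (-c) * (χ B * D * χ c) = χ (-1) * χ B * D * (χ c * χ c) := by
    rw [neg_eq_neg_one_mul c, map_mul]; ring
  simp only [hconv, htotal, hneg, ← Finset.mul_sum, sum_quadraticChar_mul_self] at hdeconv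
  have hχ1 : χ (-1) ^ 2 = 1 := quadraticChar_sq_one (neg_ne_zero.mpr one_ne_zero)
  linear_combination -χ (-1) * hdeconv - (q * f 0 - A - (q - 1) * χ B * D) * hχ1

end CharacterSums

section DiagonalForms

lemma card_sum_mul_sq_fin_one (hF : ringChar F ≠ 2) (a : Fin 1 → F) (ha : a 0 ≠ 0) (c : F) :
    (#{x : Fin 1 → F | ∑ i, a i * x i ^ 2 = c} : ℤ) = 1 + χ (a 0) * χ c := by
  rw [← card_mul_sq_eq hF ha, natCast_card_filter, natCast_card_filter, sum_fun_fin_succ]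
  simp

lemma card_sum_mul_sq_fin_add_two {m : ℕ} (a : Fin (m + 2) → F) (c : F) :
    #{x : Fin (m + 2) → F | ∑ i, a i * x i ^ 2 = c}
      = ∑ s : F, ∑ t : F, #{z : Fin m → F |
          ∑ i, a i.succ.succ * z i ^ 2 = c - a 0 * s ^ 2 - a 1 * t ^ 2} := by
  simp only [card_filter]
  rw [sum_fun_fin_succ]
  refine Finset.sum_congr rfl fun s _ => ?_
  rw [sum_fun_fin_succ]
  refine Finset.sum_congr rfl fun t _ => Finset.sum_congr rfl fun z _ => ?_
  simp only [Fin.sum_univ_succ (n := m + 1), Fin.sum_univ_succ (n := m), Fin.cons_zero,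
    Fin.cons_succ, Fin.succ_zero_eq_one]
  congr 1
  exact propext ⟨fun h => by linear_combination h, fun h => by linear_combination h⟩

theorem card_sum_mul_sq_odd (hF : ringChar F ≠ 2) (k : ℕ) (a : Fin (2 * k + 1) → F)
    (ha : ∀ i, a i ≠ 0) (c : F) :
    (#{x : Fin (2 * k + 1) → F | ∑ i, a i * x i ^ 2 = c} : ℤ)
      = q ^ (2 * k) + q ^ k * χ ((-1) ^ k * ∏ i, a i) * χ c := by
  induction k generalizing c with
  | zero => simpa using card_sum_mul_sq_fin_one hF a (ha 0) c
  | succ k ih =>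
    have hprod : (-1) ^ (k + 1) * ∏ i : Fin (2 * k + 1 + 2), a i
        = -(a 0 * a 1) * ((-1) ^ k * ∏ i : Fin (2 * k + 1), a i.succ.succ) := by
      rw [Fin.prod_univ_succ, Fin.prod_univ_succ, Fin.succ_zero_eq_one]; ring
    rw [show ((-1) ^ (k + 1) * ∏ i, a i : F) = _ from hprod, map_mul]
    refine (congrArg Nat.cast (card_sum_mul_sq_fin_add_two (m := 2 * k + 1) a c)).trans ?_
    push_cast
    simp only [ih (fun i => a i.succ.succ) (fun i => ha _), Finset.sum_add_distrib,
      Finset.sum_const, card_univ, nsmul_eq_mul, ← Finset.mul_sum,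
      sum_sum_quadraticChar_sub_mul_sq hF (ha 0) (ha 1)]
    ring

end DiagonalForms

section Hyperplane

variable {ι : Type*} [Fintype ι] [DecidableEq ι] {a : ι → F} (b : ι → F)

lemma card_translate (ha : ∀ i, a i ≠ 0) (s u v : F) :
    #{x : ι → F | ∑ i, a i * x i ^ 2 = u + 2 * s * v + s ^ 2 * ∑ i, b i ^ 2 * (a i)⁻¹
        ∧ ∑ i, b i * x i = v + s * ∑ i, b i ^ 2 * (a i)⁻¹}
      = #{y : ι → F | ∑ i, a i * y i ^ 2 = u ∧ ∑ i, b i * y i = v} := by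
  refine (Finset.card_equiv (Equiv.addRight (s • fun j => b j * (a j)⁻¹)) fun y => ?_).symm
  simp only [mem_filter, mem_univ, true_and, Equiv.coe_addRight, sum_mul_add_smul_sq b ha,
    sum_mul_add_smul b]
  constructor
  · rintro ⟨hQ, hL⟩; rw [hQ, hL]; exact ⟨rfl, rfl⟩
  · rintro ⟨hQ, hL⟩
    have hL' : ∑ i, b i * y i = v := add_right_cancel hL
    rw [hL'] at hQ
    exact ⟨by linear_combination hQ, hL'⟩

lemma card_section_eq_card_cone_section (ha : ∀ i, a i ≠ 0) {a0 b0 : F}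
    (hB : ∑ i, b i ^ 2 * (a i)⁻¹ ≠ 0) (hc : b0 ^ 2 - a0 * ∑ i, b i ^ 2 * (a i)⁻¹ = 0) :
    #{x : ι → F | ∑ i, a i * x i ^ 2 = a0 ∧ ∑ i, b i * x i = b0}
      = #{y : ι → F | ∑ i, a i * y i ^ 2 = 0 ∧ ∑ i, b i * y i = 0} := by
  set B := ∑ i, b i ^ 2 * (a i)⁻¹
  have h := card_translate b ha (b0 / B) 0 0
  rwa [show 0 + 2 * (b0 / B) * 0 + (b0 / B) ^ 2 * B = a0 by
      field_simp; linear_combination hc,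
    zero_add, div_mul_cancel₀ b0 hB] at h

lemma card_level_eq_sum_card_sections (ha : ∀ i, a i ≠ 0)
    (hB : ∑ i, b i ^ 2 * (a i)⁻¹ ≠ 0) (c : F) :
    #{x : ι → F | ∑ i, a i * x i ^ 2 = c}
      = ∑ t : F, #{y : ι → F | ∑ i, a i * y i ^ 2 = c - (∑ i, b i ^ 2 * (a i)⁻¹) * t ^ 2
          ∧ ∑ i, b i * y i = 0} := by
  rw [card_eq_sum_card_fiberwise (f := fun x => (∑ i, b i * x i) / ∑ i, b i ^ 2 * (a i)⁻¹)
    (t := univ) (fun _ _ => mem_coe.mpr (mem_univ _))]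
  refine Finset.sum_congr rfl fun t _ => ?_
  have h := card_translate b ha t (c - (∑ i, b i ^ 2 * (a i)⁻¹) * t ^ 2) 0
  rw [show c - (∑ i, b i ^ 2 * (a i)⁻¹) * t ^ 2 + 2 * t * 0 + t ^ 2 * _ = c by ring,
    zero_add] at h
  rw [← h, filter_filter]
  refine congrArg card (filter_congr fun x _ => ?_)
  rw [div_eq_iff hB]

end Hyperplane

theorem mul_card_cone_section (hF : ringChar F ≠ 2) (k : ℕ) {a : Fin (2 * k + 1) → F}
    (b : Fin (2 * k + 1) → F) (ha : ∀ i, a i ≠ 0) (hB : ∑ i, b i ^ 2 * (a i)⁻¹ ≠ 0) :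
    q * #{y : Fin (2 * k + 1) → F | ∑ i, a i * y i ^ 2 = 0 ∧ ∑ i, b i * y i = 0}
      = q ^ (2 * k)
        + (q - 1) * q ^ k * χ ((-1) ^ k * (∏ i, a i) * ∑ i, b i ^ 2 * (a i)⁻¹) := by
  have h := mul_apply_zero_of_sum_comp_sub_mul_sq hF hB
    (f := fun u => #{y : Fin (2 * k + 1) → F | ∑ i, a i * y i ^ 2 = u ∧ ∑ i, b i * y i = 0})
    (A := q ^ (2 * k)) (D := q ^ k * χ ((-1) ^ k * ∏ i, a i)) fun c => by
      rw [← card_sum_mul_sq_odd hF k a ha c, card_level_eq_sum_card_sections b ha hB c]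
      push_cast; rfl
  rw [h, map_mul χ ((-1) ^ k * ∏ i, a i)]
  ring

end QuadricCount

open QuadricCount

lemma quadChar_eq_quadraticChar (F : Type*) [Field F] [Fintype F] [DecidableEq F] :
    quadChar F = quadraticChar F := by
  ext x
  simp only [quadChar, quadraticChar_apply, quadraticCharFun]
  congr

theorem stmt_10_general (F : Type*) [Field F] [Fintype F] (hq : Odd (Fintype.card F))
    (n : ℕ) (hn : 2 ≤ n) (hno : Odd n)
    (a b : Fin n → F) (ha : ∀ i, a i ≠ 0) (a0 b0 : F)
    (hB : (∑ i, (b i) ^ 2 * (a i)⁻¹) ≠ 0)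
    (hc : b0 ^ 2 - a0 * (∑ i, (b i) ^ 2 * (a i)⁻¹) = 0) :
    (Nat.card {x : Fin n → F //
        (∑ i, a i * (x i) ^ 2) = a0 ∧ (∑ i, b i * x i) = b0} : ℤ)
      = (Fintype.card F : ℤ) ^ (n - 2)
        + (Fintype.card F : ℤ) ^ ((n - 3) / 2) * ((Fintype.card F : ℤ) - 1)
          * quadChar F ((-1 : F) ^ ((n - 1) / 2) * (∏ i, a i)
              * (∑ i, (b i) ^ 2 * (a i)⁻¹)) := by
  classical
  obtain ⟨k, rfl⟩ := hno
  obtain ⟨j, rfl⟩ : ∃ j, k = j + 1 := ⟨k - 1, by omega⟩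
  have hF : ringChar F ≠ 2 := fun h2 => by
    have := FiniteField.even_card_of_char_two h2
    rw [Nat.odd_iff] at hq
    omega
  have hq0 : (Fintype.card F : ℤ) ≠ 0 := by exact_mod_cast Fintype.card_ne_zero
  rw [Nat.card_eq_fintype_card, Fintype.card_subtype, card_section_eq_card_cone_section b ha hB hc,
    quadChar_eq_quadraticChar]
  refine mul_left_cancel₀ hq0 ((mul_card_cone_section hF (j + 1) b ha hB).trans ?_)
  rw [show 2 * (j + 1) + 1 - 2 = 2 * j + 1 by omega, show (2 * (j + 1) + 1 - 3) / 2 = j by omega,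
    show (2 * (j + 1) + 1 - 1) / 2 = j + 1 by omega]
  ring

theorem stmt_10 (F : Type*) [Field F] [Fintype F] (hq : Odd (Fintype.card F))
    (n : ℕ) (hn : 2 ≤ n) (hno : Odd n)
    (a b : Fin n → F) (ha : ∀ i, a i ≠ 0) (hb : ∃ i, b i ≠ 0) (a0 b0 : F)
    (hB : (∑ i, (b i) ^ 2 * (a i)⁻¹) ≠ 0)
    (hc : b0 ^ 2 - a0 * (∑ i, (b i) ^ 2 * (a i)⁻¹) = 0) :
    (Nat.card {x : Fin n → F //
        (∑ i, a i * (x i) ^ 2) = a0 ∧ (∑ i, b i * x i) = b0} : ℤ)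
      = (Fintype.card F : ℤ) ^ (n - 2)
        + (Fintype.card F : ℤ) ^ ((n - 3) / 2) * ((Fintype.card F : ℤ) - 1)
          * quadChar F ((-1 : F) ^ ((n - 1) / 2) * (∏ i, a i)
              * (∑ i, (b i) ^ 2 * (a i)⁻¹)) :=
  stmt_10_general F hq n hn hno a b ha a0 b0 hB hc
end

section
/- Let p be a prime, q a power of p that is a perfect square, and n ≥ 0. Then Σ over types (c_1,...,c_n) with Σ i·c_i = n of N(c_1,...,c_n) · Π_{p|i} (-q)^{c_i} · Π_{p∤i} (√q)^{c_i} equals n! · Σ_{i+pj=n, i≥0} (-1)^j · C(√q - 1 + i, √q - 1) · C((q+√q)/p, j), where N(c_1,...,c_n) = n!/Π_i (i^{c_i} c_i!). -/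
/-!
Let `A n = ∑_{σ ∈ S_n} ∏_{cycles of σ} f (length)`. Splitting a permutation of `N + 1` points into
its cycle through a fixed point, of length `m + 1` (there are `N! / (N - m)!` of these), and a
permutation of the other `N - m` points gives
`A (N + 1) = ∑ m, N! / (N - m)! * f (m + 1) * A (N - m)`, i.e. `F = ∑ A n X^n / n!` solves
`F' = (∑ f (l + 1) X^l) F`. For `f l = if p ∣ l then -q else s` and `p t = q + s`, the series
`∑ f (l + 1) X^l = s / (1 - X) - p t X^(p-1) / (1 - X^p)` is the logarithmic derivative of
`(1 - X)^(-s) (1 - X^p)^t`, so `F` is that series, and its `n`-th coefficient is the sum on the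
right.
-/

open Finset PowerSeries

lemma Fintype.card_subtype_notMem {α : Type*} [Fintype α] [DecidableEq α] (s : Finset α) :
    Fintype.card {x // x ∉ s} = Fintype.card α - #s := by
  rw [Fintype.card_subtype_compl, Fintype.card_coe]

namespace Equiv.Perm

variable {α β : Type*} [Fintype α] [DecidableEq α] [Fintype β] [DecidableEq β]
  {R : Type*} [CommSemiring R]

def cycleWeight (f : ℕ → R) (σ : Perm α) : R := (σ.partition.parts.map f).prod

def sumCycleWeight (f : ℕ → R) (n : ℕ) : R := ∑ σ : Perm (Fin n), cycleWeight f σ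

lemma partition_parts_permCongr (e : α ≃ β) (σ : Perm α) :
    (e.permCongr σ).partition.parts = σ.partition.parts := by
  have h : e.permCongr σ =
      σ.extendDomain (e.trans (Equiv.subtypeUnivEquiv fun _ => trivial).symm) := by
    ext x
    rw [extendDomain_apply_subtype _ _ trivial]
    simp [permCongr_apply]
  rw [parts_partition, parts_partition, h, cycleType_extendDomain, card_support_extend_domain,
    Fintype.card_congr e]

lemma sum_cycleWeight_congr (f : ℕ → R) (e : α ≃ β) :
    ∑ σ : Perm α, cycleWeight f σ = ∑ τ : Perm β, cycleWeight f τ :=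
  Fintype.sum_equiv e.permCongr _ _ fun σ => by
    simp only [cycleWeight, partition_parts_permCongr]

lemma cycleOf_cycleOf (g : Perm α) (a : α) : (g.cycleOf a).cycleOf a = g.cycleOf a := by
  by_cases h : g a = a
  · rw [(cycleOf_eq_one_iff g).2 h, cycleOf_one]
  · exact (isCycle_cycleOf g h).cycleOf_eq (by rwa [cycleOf_apply_self])

lemma disjoint_ofSubtype_of_support_subset {c : Perm α} {s : Finset α} (hc : c.support ⊆ s)
    (τ : Perm {x // x ∉ s}) : Disjoint c (ofSubtype τ) := by
  rw [disjoint_iff_disjoint_support, Finset.disjoint_left]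
  intro x hx hτ
  exact ((mem_support_ofSubtype x τ).1 hτ).1 (hc hx)

section CycleThrough

/- A permutation with `c.cycleOf a = c` is the cycle through `a`, or `1` when `a` is fixed; in both
cases the orbit of `a` is `insert a c.support`. -/
variable {a : α} {c : Perm α}

lemma cycleType_add_replicate_of_cycleOf_eq (hc : c.cycleOf a = c) :
    c.cycleType + Multiset.replicate (#(insert a c.support) - #c.support) 1
      = {#(insert a c.support)} := by
  by_cases h : c a = a
  · rw [← hc, (cycleOf_eq_one_iff c).2 h]
    simp
  · rw [insert_eq_of_mem (mem_support.2 h), ← hc, (isCycle_cycleOf c h).cycleType, hc]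
    simp

lemma partition_parts_mul_ofSubtype (hc : c.cycleOf a = c)
    (τ : Perm {x // x ∉ insert a c.support}) :
    (c * ofSubtype τ).partition.parts = #(insert a c.support) ::ₘ τ.partition.parts := by
  have hd := disjoint_ofSubtype_of_support_subset (subset_insert a c.support) τ
  have hτ : #τ.support ≤ Fintype.card α - #(insert a c.support) :=
    Fintype.card_subtype_notMem (insert a c.support) ▸ card_le_univ _
  have hcK : #c.support ≤ #(insert a c.support) := card_le_card (subset_insert _ _)
  have hK : #(insert a c.support) ≤ Fintype.card α := card_le_univ _
  rw [parts_partition, parts_partition, hd.cycleType_mul, hd.card_support_mul,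
    cycleType_ofSubtype, support_ofSubtype, card_map, Fintype.card_subtype_notMem,
    show Fintype.card α - (#c.support + #τ.support) = (#(insert a c.support) - #c.support) +
      (Fintype.card α - #(insert a c.support) - #τ.support) by omega,
    Multiset.replicate_add, add_add_add_comm, cycleType_add_replicate_of_cycleOf_eq hc,
    Multiset.singleton_add]

lemma cycleOf_mul_ofSubtype (hc : c.cycleOf a = c) (τ : Perm {x // x ∉ insert a c.support}) :
    (c * ofSubtype τ).cycleOf a = c := by
  rw [cycleOf_mul_of_apply_right_eq_self
    (disjoint_ofSubtype_of_support_subset (subset_insert a c.support) τ).commute a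
    (ofSubtype_apply_of_not_mem τ (not_not.2 (mem_insert_self a _))), hc]

lemma exists_cycleOf_mul_ofSubtype_eq (g : Perm α) :
    ∃ τ : Perm {x // x ∉ insert a (g.cycleOf a).support}, g.cycleOf a * ofSubtype τ = g := by
  have hfix : (((g.cycleOf a)⁻¹ * g).support : Set α) ⊆
      Set.ofPred (· ∉ insert a (g.cycleOf a).support) := by
    intro x hx hxK
    have hsame : g.SameCycle a x := by
      rcases mem_insert.1 hxK with rfl | hx
      · exact SameCycle.refl g x
      · exact (mem_support_cycleOf_iff.1 hx).1
    apply mem_support.1 hx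
    rw [mul_apply, inv_eq_iff_eq, hsame.cycleOf_apply]
  obtain ⟨τ, hτ⟩ := mem_range_ofSubtype_iff.2 hfix
  exact ⟨τ, by rw [hτ, mul_inv_cancel_left]⟩

lemma sum_cycleWeight_filter_cycleOf_eq (f : ℕ → R) (hc : c.cycleOf a = c) :
    ∑ g with g.cycleOf a = c, cycleWeight f g
      = f #(insert a c.support) * sumCycleWeight f (Fintype.card α - #(insert a c.support)) := by
  have hfiber : ({g | g.cycleOf a = c} : Finset (Perm α)) =
      univ.map ⟨fun τ : Perm {x // x ∉ insert a c.support} => c * ofSubtype τ,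
        (mul_right_injective c).comp ofSubtype_injective⟩ := by
    ext g
    simp only [mem_filter, mem_univ, true_and, mem_map, Function.Embedding.coeFn_mk]
    constructor
    · rintro rfl
      exact exists_cycleOf_mul_ofSubtype_eq g
    · rintro ⟨τ, rfl⟩
      exact cycleOf_mul_ofSubtype hc τ
  rw [hfiber, sum_map, sumCycleWeight, ← sum_cycleWeight_congr f
    (Fintype.equivFinOfCardEq (Fintype.card_subtype_notMem (insert a c.support))), mul_sum]
  simp only [cycleWeight, Function.Embedding.coeFn_mk, partition_parts_mul_ofSubtype hc,
    Multiset.map_cons, Multiset.prod_cons]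

lemma cycleOf_formPerm_cons {l : List α} (hl : (a :: l).Nodup) :
    (a :: l).formPerm.cycleOf a = (a :: l).formPerm := by
  cases l with
  | nil =>
    rw [List.formPerm_singleton]
    exact cycleOf_one a
  | cons b l =>
    refine (List.isCycle_formPerm hl (by simp)).cycleOf_eq (mem_support.1 ?_)
    rw [List.support_formPerm_of_nodup _ hl (by simp)]
    simp

lemma insert_support_formPerm_cons {l : List α} (hl : (a :: l).Nodup) :
    insert a (a :: l).formPerm.support = (a :: l).toFinset := by
  cases l with
  | nil => simp
  | cons b l =>
    rw [List.support_formPerm_of_nodup _ hl (by simp), insert_eq_of_mem (by simp)]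

lemma exists_embedding_formPerm_eq {m : ℕ} (hc : c.cycleOf a = c)
    (hcard : #(insert a c.support) = m + 1) :
    ∃ e : Fin m ↪ {x // x ≠ a}, (a :: List.ofFn fun k => (e k : α)).formPerm = c := by
  by_cases ha : c a = a
  · obtain rfl : c = 1 := hc ▸ (cycleOf_eq_one_iff c).2 ha
    obtain rfl : m = 0 := by simpa using hcard.symm
    exact ⟨⟨Fin.elim0, fun k => k.elim0⟩, by simp⟩
  have hlen : (c.toList a).length = m + 1 := by
    rw [length_toList, hc, ← hcard, insert_eq_of_mem (mem_support.2 ha)]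
  have hinj (i j : ℕ) (hi : i < m + 1) (hj : j < m + 1) (h : (c ^ i) a = (c ^ j) a) : i = j := by
    rw [← getElem_toList c a i (hlen ▸ hi), ← getElem_toList c a j (hlen ▸ hj)] at h
    exact (nodup_toList c a).getElem_inj_iff.1 h
  refine ⟨⟨fun k => ⟨(c ^ ((k : ℕ) + 1)) a, fun h => ?_⟩, fun k k' h => Fin.ext ?_⟩, ?_⟩
  · have := hinj ((k : ℕ) + 1) 0 (by omega) (by omega) (by rwa [pow_zero, one_apply])
    omega
  · simpa using hinj ((k : ℕ) + 1) ((k' : ℕ) + 1) (by omega) (by omega) (congrArg Subtype.val h)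
  · calc _ = (c.toList a).formPerm := congrArg _ ?_
      _ = c := by rw [formPerm_toList, hc]
    refine List.ext_getElem (by simp [hlen]) fun n _ _ => ?_
    rw [getElem_toList]
    cases n
    · simp
    · simp only [List.getElem_cons_succ, List.getElem_ofFn]
      rfl

end CycleThrough

lemma card_filter_cycleOf_eq_self_eq_descFactorial (a : α) (m : ℕ) :
    #{c : Perm α | c.cycleOf a = c ∧ #(insert a c.support) = m + 1}
      = (Fintype.card α - 1).descFactorial m := by
  let ψ : (Fin m ↪ {x // x ≠ a}) → Perm α := fun e => (a :: List.ofFn fun k => (e k : α)).formPerm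
  have hnodup (e : Fin m ↪ {x // x ≠ a}) : (a :: List.ofFn fun k => (e k : α)).Nodup :=
    List.nodup_cons.2 ⟨fun h => by obtain ⟨k, hk⟩ := List.mem_ofFn.1 h; exact (e k).2 hk,
      List.nodup_ofFn.2 (Subtype.val_injective.comp e.injective)⟩
  have hψ (e : Fin m ↪ {x // x ≠ a}) (k : Fin m) : (ψ e ^ ((k : ℕ) + 1)) a = e k := by
    simpa [Nat.mod_eq_of_lt] using
      List.formPerm_pow_apply_getElem _ (hnodup e) (k + 1) 0 (by simp)
  have hψinj : Function.Injective ψ := fun e e' h => by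
    ext k
    rw [← hψ, ← hψ, h]
  have himage : ({c | c.cycleOf a = c ∧ #(insert a c.support) = m + 1} : Finset (Perm α)) =
      univ.map ⟨ψ, hψinj⟩ := by
    ext c
    simp only [mem_filter, mem_univ, true_and, mem_map, Function.Embedding.coeFn_mk]
    constructor
    · rintro ⟨hc, hcard⟩
      exact exists_embedding_formPerm_eq hc hcard
    · rintro ⟨e, rfl⟩
      refine ⟨cycleOf_formPerm_cons (hnodup e), ?_⟩
      rw [insert_support_formPerm_cons (hnodup e), List.toFinset_card_of_nodup (hnodup e)]
      simp
  rw [himage, card_map, card_univ, Fintype.card_embedding_eq, Fintype.card_fin,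
    Fintype.card_subtype_compl, Fintype.card_subtype_eq]

lemma sum_cycleWeight_eq_sum_filter_cycleOf_eq_self (f : ℕ → R) (a : α) :
    ∑ σ : Perm α, cycleWeight f σ = ∑ c : Perm α with c.cycleOf a = c,
      f #(insert a c.support) * sumCycleWeight f (Fintype.card α - #(insert a c.support)) := by
  rw [← sum_fiberwise_of_maps_to (g := fun σ => σ.cycleOf a) (t := {c | c.cycleOf a = c})
    fun σ _ => by simp [cycleOf_cycleOf]]
  exact sum_congr rfl fun c hc => sum_cycleWeight_filter_cycleOf_eq f (mem_filter.1 hc).2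

theorem sumCycleWeight_zero (f : ℕ → R) : sumCycleWeight f 0 = 1 := by
  simp [sumCycleWeight, cycleWeight, parts_partition]

theorem sumCycleWeight_succ (f : ℕ → R) (N : ℕ) :
    sumCycleWeight f (N + 1) =
      ∑ m ∈ range (N + 1), N.descFactorial m * f (m + 1) * sumCycleWeight f (N - m) := by
  have hK (c : Perm (Fin (N + 1))) :
      0 < #(insert 0 c.support) ∧ #(insert 0 c.support) ≤ N + 1 :=
    ⟨card_pos.2 (insert_nonempty _ _), by simpa using card_le_univ (insert 0 c.support)⟩
  rw [sumCycleWeight, sum_cycleWeight_eq_sum_filter_cycleOf_eq_self f 0, Fintype.card_fin,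
    ← sum_fiberwise_of_maps_to (g := fun c => #(insert 0 c.support) - 1) (t := range (N + 1))
      fun c _ => by have := hK c; rw [mem_range]; omega]
  refine sum_congr rfl fun m _ => ?_
  have hm (c : Perm (Fin (N + 1))) :
      #(insert 0 c.support) - 1 = m ↔ #(insert 0 c.support) = m + 1 := by
    have := hK c
    omega
  rw [filter_filter, filter_congr fun c _ => and_congr_right fun _ => hm c,
    sum_congr rfl fun c hc => by rw [(mem_filter.1 hc).2.2, Nat.add_sub_add_right], sum_const,
    card_filter_cycleOf_eq_self_eq_descFactorial, Fintype.card_fin, nsmul_eq_mul,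
    Nat.add_sub_cancel, mul_assoc]

open scoped Nat in
theorem sumCycleWeight_eq_factorial_mul_coeff (f : ℕ → R) {F : R⟦X⟧}
    (hF₀ : constantCoeff F = 1) (hF : derivative R F = PowerSeries.mk (fun l => f (l + 1)) * F)
    (n : ℕ) : sumCycleWeight f n = n ! * coeff n F := by
  induction n using Nat.strong_induction_on with
  | _ n ih =>
  cases n with
  | zero => simp [sumCycleWeight_zero, hF₀]
  | succ N =>
    have hrec :
        coeff (N + 1) F * (N + 1) = ∑ m ∈ range (N + 1), f (m + 1) * coeff (N - m) F := by
      rw [← coeff_derivative, hF, coeff_mul, Finset.Nat.sum_antidiagonal_eq_sum_range_succ_mk]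
      simp
    calc sumCycleWeight f (N + 1)
        = ∑ m ∈ range (N + 1), N.descFactorial m * f (m + 1) * ((N - m)! * coeff (N - m) F) := by
          rw [sumCycleWeight_succ]
          exact sum_congr rfl fun m hm => by rw [ih _ (by simp at hm; omega)]
      _ = N ! * ∑ m ∈ range (N + 1), f (m + 1) * coeff (N - m) F := by
          rw [mul_sum]
          refine sum_congr rfl fun m hm => ?_
          rw [← Nat.factorial_mul_descFactorial (n := N) (k := m) (by simp at hm; omega)]
          push_cast
          ring
      _ = (N + 1)! * coeff (N + 1) F := by
          rw [← hrec, Nat.factorial_succ]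
          push_cast
          ring

end Equiv.Perm

lemma natCast_mul_pow_sub_one_mul {M : Type*} [CommSemiring M] (a : M) (n : ℕ) :
    (n : M) * a ^ (n - 1) * a = n * a ^ n := by
  cases n <;> simp [pow_succ, mul_assoc]

namespace PowerSeries

variable (R : Type*) [CommRing R]

theorem one_sub_X_mul_derivative_invOneSubPow (s : ℕ) :
    (1 - X) * derivative R (invOneSubPow R s) = (s : R⟦X⟧) * (invOneSubPow R s : R⟦X⟧) := by
  set G : R⟦X⟧ := (invOneSubPow R s : R⟦X⟧)
  have hG : G * (1 - X) ^ s = 1 := by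
    rw [← invOneSubPow_inv_eq_one_sub_pow]
    exact (invOneSubPow R s).val_inv
  have hD := congrArg (derivative R) hG
  simp only [Derivation.leibniz, derivative_pow, map_sub, derivative_X,
    Derivation.map_one_eq_zero, smul_eq_mul] at hD
  linear_combination (1 - X) * G * hD + ((s : R⟦X⟧) * G - (1 - X) * derivative R G) * hG +
    G ^ 2 * natCast_mul_pow_sub_one_mul (1 - X : R⟦X⟧) s

theorem one_sub_X_pow_mul_derivative_one_sub_X_pow_pow (p t : ℕ) :
    (1 - X ^ p) * derivative R ((1 - X ^ p) ^ t)
      = -((p * t : R⟦X⟧) * X ^ (p - 1)) * (1 - X ^ p : R⟦X⟧) ^ t := by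
  simp only [derivative_pow, map_sub, derivative_X, Derivation.map_one_eq_zero, mul_one]
  linear_combination
    (-(p : R⟦X⟧) * X ^ (p - 1)) * natCast_mul_pow_sub_one_mul (1 - X ^ p : R⟦X⟧) t

theorem one_sub_X_pow_pow_eq_sum_range (p t : ℕ) :
    (1 - X ^ p : R⟦X⟧) ^ t
      = ∑ j ∈ range (t + 1), C ((-1) ^ j * t.choose j : R) * X ^ (p * j) := by
  rw [sub_eq_neg_add, add_pow]
  refine sum_congr rfl fun j _ => ?_
  rw [neg_pow, ← pow_mul, one_pow, mul_one, map_mul, map_pow, map_neg, map_one, map_natCast]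
  ring

end PowerSeries

noncomputable def cycleEGF (p s t : ℕ) : ℤ⟦X⟧ := (invOneSubPow ℤ s : ℤ⟦X⟧) * (1 - X ^ p) ^ t

section CycleEGF

variable {p q s t : ℕ}

lemma constantCoeff_cycleEGF (hp : 0 < p) : constantCoeff (cycleEGF p s t) = 1 := by
  have hG := congrArg constantCoeff (invOneSubPow ℤ s).val_inv
  simp only [invOneSubPow_inv_eq_one_sub_pow, map_mul, map_pow, map_sub, map_one,
    constantCoeff_X, sub_zero, one_pow, mul_one] at hG
  simp [cycleEGF, hG, hp.ne']

lemma sum_filter_add_mul_eq_sum_range (hp : 0 < p) (n : ℕ) (g : ℕ × ℕ → ℤ) :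
    ∑ ij ∈ (range (n + 1) ×ˢ range (n + 1)).filter (fun ij => ij.1 + p * ij.2 = n), g ij
      = ∑ j ∈ range (n + 1), if p * j ≤ n then g (n - p * j, j) else 0 := by
  have hset : (range (n + 1) ×ˢ range (n + 1)).filter (fun ij => ij.1 + p * ij.2 = n) =
      ((range (n + 1)).filter (fun j => p * j ≤ n)).image fun j => (n - p * j, j) := by
    ext ⟨i, j⟩
    have : j ≤ p * j := Nat.le_mul_of_pos_left j hp
    simp only [mem_filter, mem_product, mem_range, mem_image, Prod.mk.injEq]
    constructor
    · rintro ⟨-, h⟩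
      exact ⟨j, ⟨by omega, by omega⟩, by omega, rfl⟩
    · rintro ⟨j, ⟨-, hj⟩, rfl, rfl⟩
      omega
  rw [hset, sum_image fun j _ j' _ h => (Prod.ext_iff.1 h).2, sum_filter]

theorem coeff_cycleEGF (hp : 0 < p) (hs : 0 < s) (n : ℕ) :
    coeff n (cycleEGF p s t) =
      ∑ ij ∈ (range (n + 1) ×ˢ range (n + 1)).filter (fun ij => ij.1 + p * ij.2 = n),
        (-1 : ℤ) ^ ij.2 * ((s - 1 + ij.1).choose (s - 1) : ℤ) * (t.choose ij.2 : ℤ) := by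
  set g : ℕ → ℤ := fun j => if p * j ≤ n then
    (-1) ^ j * ((s - 1 + (n - p * j)).choose (s - 1) : ℤ) * (t.choose j : ℤ) else 0
  have hcoeff : coeff n (cycleEGF p s t) = ∑ j ∈ range (t + 1), g j := by
    rw [cycleEGF, one_sub_X_pow_pow_eq_sum_range, mul_sum, map_sum]
    refine sum_congr rfl fun j _ => ?_
    rw [mul_left_comm, coeff_C_mul, mul_comm (invOneSubPow ℤ s : ℤ⟦X⟧), coeff_X_pow_mul',
      invOneSubPow_val_eq_mk_sub_one_add_choose_of_pos ℤ s hs]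
    split_ifs <;> simp [g, *]
    ring
  rw [hcoeff, sum_filter_add_mul_eq_sum_range hp,
    sum_subset (range_subset_range.2 (by omega : t + 1 ≤ n + t + 1)) fun j _ hj => ?_,
    ← sum_subset (range_subset_range.2 (by omega : n + 1 ≤ n + t + 1)) fun j _ hj => ?_]
  · simp only [mem_range, not_lt] at hj
    have : j ≤ p * j := Nat.le_mul_of_pos_left j hp
    simp [g, show ¬ p * j ≤ n by omega]
  · simp only [mem_range, not_lt] at hj
    simp [g, Nat.choose_eq_zero_of_lt (show t < j by omega)]

theorem one_sub_X_pow_mul_derivative_cycleEGF :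
    (1 - X ^ p) * derivative ℤ (cycleEGF p s t)
      = ((s : ℤ⟦X⟧) * ∑ i ∈ range p, X ^ i - (p * t : ℤ⟦X⟧) * X ^ (p - 1)) * cycleEGF p s t := by
  have hG := one_sub_X_mul_derivative_invOneSubPow ℤ s
  have hP := one_sub_X_pow_mul_derivative_one_sub_X_pow_pow ℤ p t
  have hgeom := mul_neg_geom_sum (X : ℤ⟦X⟧) p
  simp only [cycleEGF, Derivation.leibniz, smul_eq_mul]
  linear_combination (invOneSubPow ℤ s : ℤ⟦X⟧) * hP +
    (∑ i ∈ range p, X ^ i) * (1 - X ^ p) ^ t * hG -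
    (1 - X ^ p) ^ t * derivative ℤ (invOneSubPow ℤ s : ℤ⟦X⟧) * hgeom

theorem one_sub_X_pow_mul_mk_ite_dvd (hp : 0 < p) (hpt : (p * t : ℤ) = q + s) :
    (1 - X ^ p) * PowerSeries.mk (fun l => if p ∣ l + 1 then -(q : ℤ) else s)
      = (s : ℤ⟦X⟧) * ∑ i ∈ range p, X ^ i - (p * t : ℤ⟦X⟧) * X ^ (p - 1) := by
  ext n
  rw [← map_natCast (C (R := ℤ)) s, ← map_natCast (C (R := ℤ)) p, ← map_natCast (C (R := ℤ)) t,
    ← map_mul]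
  simp only [map_sub, sub_mul, one_mul, coeff_C_mul, coeff_X_pow_mul', coeff_mk, map_sum,
    coeff_X_pow, sum_ite_eq, mem_range]
  rcases lt_trichotomy (n + 1) p with h | rfl | h
  · have : ¬ p ∣ n + 1 := Nat.not_dvd_of_pos_of_lt n.succ_pos h
    simp [this, show ¬ p ≤ n by omega, show n < p by omega, show n ≠ p - 1 by omega]
  · push_cast at hpt
    simp
    linear_combination hpt
  · have : p ∣ n + 1 ↔ p ∣ n - p + 1 := by
      rw [show n + 1 = n - p + 1 + p by omega, Nat.dvd_add_self_right]
    simp [this, show p ≤ n by omega, show ¬ n < p by omega, show n ≠ p - 1 by omega]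

theorem derivative_cycleEGF (hp : 0 < p) (hpt : (p * t : ℤ) = q + s) :
    derivative ℤ (cycleEGF p s t)
      = PowerSeries.mk (fun l => if p ∣ l + 1 then -(q : ℤ) else s) * cycleEGF p s t := by
  have hne : (1 - X ^ p : ℤ⟦X⟧) ≠ 0 := fun h => by
    simpa [hp.ne'] using congrArg constantCoeff h
  apply mul_left_cancel₀ hne
  rw [one_sub_X_pow_mul_derivative_cycleEGF, ← mul_assoc, one_sub_X_pow_mul_mk_ite_dvd hp hpt]

end CycleEGF

theorem stmt_15 (p e q s n : ℕ) (hp : p.Prime) (he : 0 < e) (hq : q = p ^ e)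
    (hs : q = s ^ 2) :
    (∑ σ : Equiv.Perm (Fin n),
        (σ.partition.parts.map (fun l => if p ∣ l then -(q : ℤ) else (s : ℤ))).prod)
      = (Nat.factorial n : ℤ) *
        ∑ ij ∈ (Finset.range (n + 1) ×ˢ Finset.range (n + 1)).filter
            (fun ij => ij.1 + p * ij.2 = n),
          (-1 : ℤ) ^ ij.2 * ((s - 1 + ij.1).choose (s - 1) : ℤ)
            * (((q + s) / p).choose ij.2 : ℤ) := by
  have hq0 : 0 < q := hq ▸ pow_pos hp.pos e
  have hs0 : 0 < s := Nat.pos_of_ne_zero fun h => by simp [h] at hs; omega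
  have hpq : p ∣ q := hq ▸ dvd_pow_self p he.ne'
  have hps : p ∣ s := hp.dvd_of_dvd_pow (hs ▸ hpq)
  have hpt : (p * ((q + s) / p : ℕ) : ℤ) = q + s := by
    exact_mod_cast Nat.mul_div_cancel' (dvd_add hpq hps)
  rw [← coeff_cycleEGF hp.pos hs0]
  exact Equiv.Perm.sumCycleWeight_eq_factorial_mul_coeff (fun l => if p ∣ l then -(q : ℤ) else s)
    (constantCoeff_cycleEGF hp.pos) (derivative_cycleEGF hp.pos hpt) n
end
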